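/- arXiv:1410.8628 — 4 statements merged into one kernel-verified Lean document; each statement's English description precedes it below -/
import Mathlib

section
/- For every r-colored poset P and every integer j ≥ 0, the order polynomial satisfies Ω_P(j) = Σ_{w ∈ L(P)} Σ_{π ∈ CL(w)} Ω_π(j). -/
open scoped BigOperators

/-- Lexicographic (color-first) strict order on colored letters `(value, color)`. -/
def letterLT (x y : ℕ × ℕ) : Prop :=
  x.2 < y.2 ∨ (x.2 = y.2 ∧ x.1 < y.1)

instance : DecidableRel letterLT := fun x y => by
  unfold letterLT; infer_instance

/-- Weak lexicographic order on parts `(color, value)` of `[0,j]_{(r)}`. -/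
def partLE (a b : ℕ × ℕ) : Prop :=
  a.1 < b.1 ∨ (a.1 = b.1 ∧ a.2 ≤ b.2)

/-- Strict lexicographic order on parts `(color, value)` of `[0,j]_{(r)}`. -/
def partLT (a b : ℕ × ℕ) : Prop :=
  a.1 < b.1 ∨ (a.1 = b.1 ∧ a.2 < b.2)

/-- `x^{(k)}`: shift the color of the colored letter `x = (value, color)` down by `k` mod `r`. -/
def shiftLetter (r k : ℕ) (x : ℕ × ℕ) : ℕ × ℕ :=
  (x.1, (x.2 + r - k % r) % r)

/-- An `r`-colored poset: a finite poset whose elements are the symbols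
`0_1, …, 0_{r−1}` (encoded as `(0, m)`) together with finitely many colored letters
(pairs `(value, color)` with positive value and color `< r`) having pairwise distinct
values, such that `0_1 ≺ 0_2 ≺ ⋯ ≺ 0_{r−1}`. -/
structure ColoredPoset (r : ℕ) where
  elems : Finset (ℕ × ℕ)
  rel : ℕ × ℕ → ℕ × ℕ → Prop
  zero_mem : ∀ m, 1 ≤ m → m < r → ((0 : ℕ), m) ∈ elems
  zero_only : ∀ x ∈ elems, x.1 = 0 → 1 ≤ x.2 ∧ x.2 < r
  col_lt : ∀ x ∈ elems, x.2 < r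
  val_inj : ∀ x ∈ elems, ∀ y ∈ elems, 1 ≤ x.1 → x.1 = y.1 → x = y
  rel_refl : ∀ x ∈ elems, rel x x
  rel_antisymm : ∀ x ∈ elems, ∀ y ∈ elems, rel x y → rel y x → x = y
  rel_trans : ∀ x ∈ elems, ∀ y ∈ elems, ∀ z ∈ elems, rel x y → rel y z → rel x z
  zero_chain : ∀ m m', 1 ≤ m → m ≤ m' → m' < r → rel (0, m) (0, m')

/-- A colored `P`-partition of the `r`-colored poset `P` with parts in
`[0,j]_{(r)} = {0,…,r−1} × {0,…,j}` (a part `(k, u)` lies in block `X_k`):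
(i) `f(0_m) = (m, 0)`; (ii) `f` is weakly increasing along `≺`;
(iii) strict increase when both parts lie in block `k` and the `k`-shifted letters
decrease; (iv) only a letter of color `k` may take the maximal value `(k, j)`. -/
def IsCPP (r j : ℕ) (P : ColoredPoset r) (f : {x // x ∈ P.elems} → ℕ × ℕ) : Prop :=
  (∀ x, (f x).1 < r ∧ (f x).2 ≤ j) ∧
  (∀ m (h1 : 1 ≤ m) (h2 : m < r), f ⟨(0, m), P.zero_mem m h1 h2⟩ = (m, 0)) ∧
  (∀ x y, P.rel x.1 y.1 → partLE (f x) (f y)) ∧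
  (∀ x y, P.rel x.1 y.1 → (f x).1 = (f y).1 →
      letterLT (shiftLetter r (f x).1 y.1) (shiftLetter r (f x).1 x.1) →
      partLT (f x) (f y)) ∧
  (∀ x, (f x).2 = j → x.1.2 = (f x).1)

/-- The order polynomial `Ω_P(j)`: the number of colored `P`-partitions with parts
in `[0,j]_{(r)}`. -/
noncomputable def Omega (r j : ℕ) (P : ColoredPoset r) : ℕ :=
  Nat.card {f : {x // x ∈ P.elems} → ℕ × ℕ // IsCPP r j P f}

/-- `w` is a linear extension of the `r`-colored poset `P`: a word listing each
element of `P` exactly once, with `x` before `y` whenever `x ≺ y`. -/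
def IsLinExt {r : ℕ} (P : ColoredPoset r) (w : List (ℕ × ℕ)) : Prop :=
  w.Nodup ∧ (∀ x, x ∈ w ↔ x ∈ P.elems) ∧
  ∀ x ∈ P.elems, ∀ y ∈ P.elems, P.rel x y → x ≠ y → w.idxOf x < w.idxOf y

/-- The number of zero symbols appearing strictly before `x` in the word `w`. -/
def zerosBefore (w : List (ℕ × ℕ)) (x : ℕ × ℕ) : ℕ :=
  ((w.take (w.idxOf x)).filter fun z => decide (z.1 = 0)).length

/-- The `i`-th block of the word `w`: its colored letters (positive value) preceded by
exactly `i` zero symbols. -/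
def block (w : List (ℕ × ℕ)) (i : ℕ) : List (ℕ × ℕ) :=
  w.filter fun x => decide (1 ≤ x.1 ∧ zerosBefore w x = i)

/-- `π_i`: the `i`-th block of `w` with every letter shifted by `i`. -/
def blockWord (r : ℕ) (w : List (ℕ × ℕ)) (i : ℕ) : List (ℕ × ℕ) :=
  (block w i).map (shiftLetter r i)

/-- `u ∈ CL(w)`: `u` is a shuffle of the shifted blocks `π_0, …, π_{r−1}` of `w`,
i.e. the letters of `u` are exactly those of `π_0, …, π_{r−1}` and each `π_i`
is a subsequence of `u`. -/
def IsColoredLinExt (r : ℕ) (w u : List (ℕ × ℕ)) : Prop :=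
  (↑u : Multiset (ℕ × ℕ)) =
      ∑ i ∈ Finset.range r, (↑(blockWord r w i) : Multiset (ℕ × ℕ)) ∧
  ∀ i < r, (blockWord r w i).Sublist u

open Classical in
/-- The (finite) set `L(P)` of linear extensions of `P`. -/
noncomputable def LinExts {r : ℕ} (P : ColoredPoset r) : Finset (List (ℕ × ℕ)) :=
  P.elems.toList.permutations.toFinset.filter (IsLinExt P)

open Classical in
/-- The (finite) set `CL(w)` of colored linear extensions of `w`. -/
noncomputable def ColLinExts (r : ℕ) (w : List (ℕ × ℕ)) : Finset (List (ℕ × ℕ)) :=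
  (((List.range r).flatMap fun i => blockWord r w i).permutations.toFinset).filter
    (IsColoredLinExt r w)

/-- A colored `π`-partition of the word `u = u(0) ⋯ u(m−1)` with parts in `[0,j]_{(r)}`:
a colored `P`-partition of the chain `u(0) ≺ ⋯ ≺ u(m−1) ≺ 0_1 ≺ ⋯ ≺ 0_{r−1}`
(the forced values `f(0_m) = (m,0)` of the zeros are built into the conditions). -/
def IsWordCPP (r j : ℕ) (u : List (ℕ × ℕ)) (f : Fin u.length → ℕ × ℕ) : Prop :=
  (∀ i, (f i).1 < r ∧ (f i).2 ≤ j) ∧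
  (∀ i k : Fin u.length, i < k → partLE (f i) (f k)) ∧
  (∀ i k : Fin u.length, i < k → (f i).1 = (f k).1 →
      letterLT (shiftLetter r (f i).1 (u.get k)) (shiftLetter r (f i).1 (u.get i)) →
      partLT (f i) (f k)) ∧
  (∀ i : Fin u.length, ∀ m, 1 ≤ m → m < r → partLE (f i) (m, 0)) ∧
  (∀ i : Fin u.length, ∀ m, 1 ≤ m → m < r → (f i).1 = m →
      letterLT (shiftLetter r m ((0 : ℕ), m)) (shiftLetter r m (u.get i)) →
      partLT (f i) (m, 0)) ∧
  (∀ i, (f i).2 = j → (u.get i).2 = (f i).1)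

/-- `Ω_π(j)` for a word `π`: the number of colored `π`-partitions with parts in
`[0,j]_{(r)}`. -/
noncomputable def OmegaWord (r j : ℕ) (u : List (ℕ × ℕ)) : ℕ :=
  Nat.card {f : Fin u.length → ℕ × ℕ // IsWordCPP r j u f}


/-!
A colored `P`-partition `f` determines a linear extension `w` of `P`: sort the elements by their
parts, breaking ties between equal parts by the shifted letters `x^{(k)}`, which condition (iii)
forces to increase along `≺`. The zero symbol `0_k` then opens the block of the letters whose parts
lie in `X_k`, and sorting all shifted letters by (value, letter) gives a shuffle `π ∈ CL(w)` of
the shifted blocks, along which the values of `f` form a `π`-partition `g`. Conversely, from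
`(w, π, g)` one recovers `f`, reading the block of a letter off `w` and its value off `g`. The two
constructions are mutually inverse, so `Ω_P(j)` counts the triples `(w, π, g)`.
-/

open List

namespace List

variable {α : Type*} [BEq α] [LawfulBEq α] {l : List α} {a b : α}

theorem pair_sublist_iff_idxOf_lt (hl : l.Nodup) (hb : b ∈ l) :
    [a, b] <+ l ↔ l.idxOf a < l.idxOf b := by
  induction l with
  | nil => simp at hb
  | cons c t ih =>
    obtain ⟨hct, ht⟩ := nodup_cons.1 hl
    by_cases hac : a = c
    · subst hac
      by_cases hba : b = a
      · subst hba; simp [hct]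
      · simp [idxOf_cons_ne _ (Ne.symm hba), (mem_cons.1 hb).resolve_left hba]
    · by_cases hbc : b = c
      · subst hbc
        simp only [idxOf_cons_self, Nat.not_lt_zero, iff_false, idxOf_cons_ne _ (Ne.symm hac)]
        exact fun h => hct ((h.of_cons_of_ne hac).subset (by simp))
      · rw [idxOf_cons_ne _ (Ne.symm hac), idxOf_cons_ne _ (Ne.symm hbc), Nat.succ_lt_succ_iff,
          ← ih ht ((mem_cons.1 hb).resolve_left hbc)]
        exact ⟨fun h => h.of_cons_of_ne hac, fun h => h.cons c⟩

theorem pair_sublist_or_pair_sublist (hl : l.Nodup) (ha : a ∈ l) (hb : b ∈ l) (hab : a ≠ b) :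
    [a, b] <+ l ∨ [b, a] <+ l := by
  rw [pair_sublist_iff_idxOf_lt hl hb, pair_sublist_iff_idxOf_lt hl ha]
  have : l.idxOf a ≠ l.idxOf b := fun h => hab ((idxOf_inj ha).1 h)
  omega

theorem not_pair_sublist_of_pair_sublist (hl : l.Nodup) (h : [a, b] <+ l) : ¬ [b, a] <+ l := by
  intro h'
  rw [pair_sublist_iff_idxOf_lt hl (h.subset (by simp))] at h
  rw [pair_sublist_iff_idxOf_lt hl (h'.subset (by simp))] at h'
  omega

end List

section KeyLE

variable {α β : Type*} [LinearOrder β] (key : α ↪ β)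

def KeyLE (a b : α) : Prop := key a ≤ key b

instance : DecidableRel (KeyLE key) := fun _ _ => inferInstanceAs (Decidable (_ ≤ _))
instance : IsTrans α (KeyLE key) := ⟨fun _ _ _ => le_trans⟩
instance : Std.Antisymm (KeyLE key) := ⟨fun _ _ h h' => key.injective (le_antisymm h h')⟩
instance : Std.Total (KeyLE key) := ⟨fun _ _ => le_total _ _⟩

variable {key}

theorem List.Pairwise.nodup_of_key_lt {l : List α} (hl : l.Pairwise (key · < key ·)) : l.Nodup :=
  hl.imp fun h => ne_of_apply_ne key h.ne

theorem List.Pairwise.pair_sublist_iff {l : List α} (hl : l.Pairwise (key · < key ·)) {a b : α}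
    (ha : a ∈ l) (hb : b ∈ l) : [a, b] <+ l ↔ key a < key b := by
  classical
  refine ⟨fun h => hl.forall_sublist h, fun h => ?_⟩
  rcases pair_sublist_or_pair_sublist hl.nodup_of_key_lt ha hb (ne_of_apply_ne key h.ne) with
    h' | h'
  · exact h'
  · exact absurd (hl.forall_sublist h') (not_lt.2 h.le)

theorem List.sublist_of_subset_of_pairwise_lt {l₁ l₂ : List α} (h₁ : l₁.Pairwise (key · < key ·))
    (h₂ : l₂.Pairwise (key · < key ·)) (h : l₁ ⊆ l₂) : l₁ <+ l₂ :=
  sublist_of_subperm_of_pairwise (r := KeyLE key) (subperm_of_subset h₁.nodup_of_key_lt h)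
    (h₁.imp le_of_lt) (h₂.imp le_of_lt)

theorem Finset.sort_keyLE_eq_iff (s : Finset α) (l : List α) :
    s.sort (KeyLE key) = l ↔ l.Pairwise (key · < key ·) ∧ ∀ a, a ∈ l ↔ a ∈ s := by
  have hsorted : (s.sort (KeyLE key)).Pairwise (key · < key ·) :=
    ((s.pairwise_sort (KeyLE key)).and (s.sort_nodup _)).imp fun h =>
      lt_of_le_of_ne h.1 (key.injective.ne h.2)
  constructor
  · rintro rfl
    exact ⟨hsorted, fun a => mem_sort _⟩
  · rintro ⟨hl, hmem⟩
    have : Std.Irrefl (fun a b => key a < key b) := ⟨fun a => lt_irrefl (key a)⟩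
    exact hsorted.eq_of_mem_iff hl fun a => by rw [mem_sort, hmem]

end KeyLE

theorem Multiset.map_finset_sum {ι α β : Type*} (f : α → β) (s : Finset ι) (M : ι → Multiset α) :
    (∑ i ∈ s, M i).map f = ∑ i ∈ s, (M i).map f :=
  map_sum (Multiset.mapAddMonoidHom f) M s

theorem Multiset.sum_range_filter_eq {α : Type*} (M : Multiset α) (p : α → Prop)
    [DecidablePred p] (blk : α → ℕ) {n : ℕ} (h : ∀ a ∈ M, p a → blk a < n) :
    ∑ i ∈ Finset.range n, M.filter (fun a => p a ∧ blk a = i) = M.filter p := by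
  classical
  ext a
  simp_rw [Multiset.count_sum', Multiset.count_filter]
  by_cases ha : a ∈ M
  · by_cases hp : p a
    · simp [hp, h a ha hp]
    · simp [hp]
  · simp [Multiset.count_eq_zero_of_notMem ha]

theorem Multiset.coe_flatMap_range {β : Type*} (g : ℕ → List β) (n : ℕ) :
    (↑((List.range n).flatMap g) : Multiset β) = ∑ i ∈ Finset.range n, (g i : Multiset β) := by
  rw [← Multiset.coe_bind, Finset.sum_eq_multiset_sum]
  simp [Multiset.bind, Multiset.join, Multiset.range]

theorem partLE_iff_toLex_le {a b : ℕ × ℕ} : partLE a b ↔ toLex a ≤ toLex b := by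
  simp [partLE, Prod.Lex.le_iff]

theorem partLT_iff_toLex_lt {a b : ℕ × ℕ} : partLT a b ↔ toLex a < toLex b := by
  simp [partLT, Prod.Lex.lt_iff]

def letterKey (z : ℕ × ℕ) : ℕ ×ₗ ℕ := toLex z.swap

theorem letterKey_lt_letterKey {x y : ℕ × ℕ} : letterKey x < letterKey y ↔ letterLT x y := by
  simp [letterKey, letterLT, Prod.Lex.lt_iff]

theorem letterKey_injective : Function.Injective letterKey := fun _ _ h =>
  Prod.swap_injective (toLex.injective h)

theorem letterLT_of_ne {x y : ℕ × ℕ} (h : x ≠ y) (h' : ¬ letterLT y x) : letterLT x y := by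
  rw [← letterKey_lt_letterKey] at h' ⊢
  exact lt_of_le_of_ne (not_lt.1 h') (letterKey_injective.ne h)

theorem zero_letterLT {z : ℕ × ℕ} (hz : 1 ≤ z.1) : letterLT (0, 0) z := by
  unfold letterLT; omega

section shiftLetter

variable {r k : ℕ} {x : ℕ × ℕ}

@[simp] theorem shiftLetter_fst : (shiftLetter r k x).1 = x.1 := rfl

theorem shiftLetter_snd_lt (hr : 0 < r) : (shiftLetter r k x).2 < r := Nat.mod_lt _ hr

theorem shiftLetter_zero (hx : x.2 < r) : shiftLetter r 0 x = x := by
  simp [shiftLetter, Nat.add_mod_right, Nat.mod_eq_of_lt hx]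

theorem shiftLetter_snd_eq_zero_iff (hx : x.2 < r) (hk : k < r) :
    (shiftLetter r k x).2 = 0 ↔ x.2 = k := by
  simp only [shiftLetter, Nat.mod_eq_of_lt hk]
  constructor
  · intro h
    obtain ⟨c, hc⟩ := Nat.dvd_of_mod_eq_zero h
    rcases c with _ | _ | c
    · omega
    · omega
    · have : 2 * r ≤ r * (c + 1 + 1) := by nlinarith
      omega
  · intro h
    rw [h, Nat.add_sub_cancel_left, Nat.mod_self]

theorem shiftLetter_zero_symbol {m : ℕ} (hm : m < r) : shiftLetter r m (0, m) = (0, 0) :=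
  Prod.ext rfl ((shiftLetter_snd_eq_zero_iff hm hm).2 rfl)

end shiftLetter

theorem ColoredPoset.pos_of_mem {r : ℕ} (P : ColoredPoset r) {x : ℕ × ℕ} (hx : x ∈ P.elems) :
    0 < r :=
  (Nat.zero_le _).trans_lt (P.col_lt x hx)

namespace IsLinExt

variable {r : ℕ} {P : ColoredPoset r} {w : List (ℕ × ℕ)}

theorem pair_sublist_of_rel (hw : IsLinExt P w) {x y : ℕ × ℕ} (hx : x ∈ P.elems)
    (hy : y ∈ P.elems) (hxy : P.rel x y) (hne : x ≠ y) : [x, y] <+ w :=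
  (pair_sublist_iff_idxOf_lt hw.1 ((hw.2.1 y).2 hy)).2 (hw.2.2 x hx y hy hxy hne)

theorem snd_lt_of_pair_sublist (hw : IsLinExt P w) {x y : ℕ × ℕ} (hx0 : x.1 = 0) (hy0 : y.1 = 0)
    (hxy : [x, y] <+ w) : x.2 < y.2 := by
  have hx := (hw.2.1 x).1 (hxy.subset (by simp))
  have hy := (hw.2.1 y).1 (hxy.subset (by simp))
  have hne : x ≠ y := by simpa using hw.1.sublist hxy
  by_contra! hle
  refine not_pair_sublist_of_pair_sublist hw.1 hxy (hw.pair_sublist_of_rel hy hx ?_ hne.symm)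
  rw [show x = (0, x.2) from Prod.ext hx0 rfl, show y = (0, y.2) from Prod.ext hy0 rfl]
  exact P.zero_chain _ _ (P.zero_only y hy hy0).1 hle (P.zero_only x hx hx0).2

theorem filter_fst_eq_zero (hw : IsLinExt P w) :
    w.filter (fun z => z.1 = 0) = (List.range' 1 (r - 1)).map ((0 : ℕ), ·) := by
  have : Std.Irrefl (fun a b : ℕ × ℕ => a.2 < b.2) := ⟨fun a => lt_irrefl a.2⟩
  refine Pairwise.eq_of_mem_iff (r := fun a b : ℕ × ℕ => a.2 < b.2) ?_ ?_ fun z => ?_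
  · refine pairwise_of_forall_sublist fun {a b} hab => ?_
    have ha := mem_filter.1 (hab.subset (by simp : a ∈ [a, b]))
    have hb := mem_filter.1 (hab.subset (by simp : b ∈ [a, b]))
    simp only [decide_eq_true_eq] at ha hb
    exact hw.snd_lt_of_pair_sublist ha.2 hb.2 (hab.trans filter_sublist)
  · simpa [pairwise_map] using pairwise_lt_range'
  · simp only [mem_filter, hw.2.1, decide_eq_true_eq, mem_map, mem_range']
    constructor
    · rintro ⟨hz, h0⟩
      obtain ⟨h1, h2⟩ := P.zero_only z hz h0
      exact ⟨z.2, ⟨z.2 - 1, by omega, by omega⟩, Prod.ext h0.symm rfl⟩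
    · rintro ⟨a, ⟨i, hi, rfl⟩, rfl⟩
      exact ⟨P.zero_mem _ (by omega) (by omega), rfl⟩

theorem take_idxOf_filter_fst_eq_zero (hw : IsLinExt P w) (x : ℕ × ℕ) :
    (w.take (w.idxOf x)).filter (fun z => decide (z.1 = 0)) =
      ((List.range' 1 (r - 1)).map ((0 : ℕ), ·)).take (zerosBefore w x) := by
  rw [← hw.filter_fst_eq_zero]
  exact prefix_iff_eq_take.1 ((w.take_prefix _).filter _)

theorem zerosBefore_le (hw : IsLinExt P w) (x : ℕ × ℕ) : zerosBefore w x ≤ r - 1 := by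
  have := congrArg length (hw.take_idxOf_filter_fst_eq_zero x)
  rw [length_take, length_map, length_range'] at this
  exact (show zerosBefore w x = _ from this) ▸ min_le_right _ _

theorem zerosBefore_lt (hw : IsLinExt P w) {x : ℕ × ℕ} (hx : x ∈ w) : zerosBefore w x < r := by
  have := P.pos_of_mem ((hw.2.1 x).1 hx)
  have := hw.zerosBefore_le x
  omega

theorem le_zerosBefore_iff (hw : IsLinExt P w) {x : ℕ × ℕ} (hx : x ∈ w) {m : ℕ} (hm1 : 1 ≤ m)
    (hmr : m < r) : m ≤ zerosBefore w x ↔ [(0, m), x] <+ w := by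
  have h0m : ((0 : ℕ), m) ∈ w := (hw.2.1 _).2 (P.zero_mem m hm1 hmr)
  rw [pair_sublist_iff_idxOf_lt hw.1 hx, ← mem_take_iff_idxOf_lt h0m]
  have : ((0 : ℕ), m) ∈ w.take (w.idxOf x) ↔
      ((0 : ℕ), m) ∈ (w.take (w.idxOf x)).filter (fun z => decide (z.1 = 0)) := by
    simp [mem_filter]
  rw [this, hw.take_idxOf_filter_fst_eq_zero, ← map_take,
    take_range'_of_length_ge (hw.zerosBefore_le x)]
  simp only [mem_map, mem_range'_1, Prod.mk.injEq, true_and, exists_eq_right]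
  omega

theorem zerosBefore_eq_of_forall (hw : IsLinExt P w) {x : ℕ × ℕ} (hx : x ∈ w) {k : ℕ} (hk : k < r)
    (h : ∀ m, 1 ≤ m → m < r → ([(0, m), x] <+ w ↔ m ≤ k)) : zerosBefore w x = k := by
  have key : ∀ m, 1 ≤ m → m < r → (m ≤ zerosBefore w x ↔ m ≤ k) := fun m h1 h2 =>
    (hw.le_zerosBefore_iff hx h1 h2).trans (h m h1 h2)
  have h1 := key (zerosBefore w x)
  have h2 := key k
  have := hw.zerosBefore_lt hx
  omega

end IsLinExt

theorem zerosBefore_mono {w : List (ℕ × ℕ)} (hw : w.Nodup) {x y : ℕ × ℕ} (h : [x, y] <+ w) :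
    zerosBefore w x ≤ zerosBefore w y :=
  ((take_prefix_take_left ((pair_sublist_iff_idxOf_lt hw (h.subset (by simp))).1 h).le).filter
    _).length_le

theorem mem_block_iff {w : List (ℕ × ℕ)} {i : ℕ} {x : ℕ × ℕ} :
    x ∈ block w i ↔ x ∈ w ∧ 1 ≤ x.1 ∧ zerosBefore w x = i := by
  simp [block]

theorem mem_blockWord_iff {r : ℕ} {w : List (ℕ × ℕ)} {i : ℕ} {z : ℕ × ℕ} :
    z ∈ blockWord r w i ↔ ∃ x ∈ block w i, shiftLetter r i x = z := by
  simp [blockWord]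

theorem IsLinExt.sum_blocks {r : ℕ} {P : ColoredPoset r} {w : List (ℕ × ℕ)} (hw : IsLinExt P w) :
    ∑ i ∈ Finset.range r, (block w i : Multiset (ℕ × ℕ)) = ↑(w.filter (fun x => 1 ≤ x.1)) := by
  simp only [block, ← Multiset.filter_coe]
  exact Multiset.sum_range_filter_eq _ _ _ fun x hx _ => hw.zerosBefore_lt hx

theorem mem_linExts_iff {r : ℕ} {P : ColoredPoset r} {w : List (ℕ × ℕ)} :
    w ∈ LinExts P ↔ IsLinExt P w := by
  classical
  simp only [LinExts, Finset.mem_filter, mem_toFinset, mem_permutations, and_iff_right_iff_imp]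
  exact fun hw => (perm_ext_iff_of_nodup hw.1 P.elems.nodup_toList).2 fun a => by
    rw [hw.2.1, Finset.mem_toList]

theorem mem_colLinExts_iff {r : ℕ} {w u : List (ℕ × ℕ)} :
    u ∈ ColLinExts r w ↔ IsColoredLinExt r w u := by
  classical
  simp only [ColLinExts, Finset.mem_filter, mem_toFinset, mem_permutations, and_iff_right_iff_imp]
  exact fun hu => Multiset.coe_eq_coe.1 (hu.1.trans (Multiset.coe_flatMap_range _ _).symm)

namespace IsColoredLinExt

variable {r : ℕ} {P : ColoredPoset r} {w u : List (ℕ × ℕ)}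

theorem mem_iff (hw : IsLinExt P w) (hu : IsColoredLinExt r w u) {z : ℕ × ℕ} :
    z ∈ u ↔ ∃ x ∈ w, 1 ≤ x.1 ∧ shiftLetter r (zerosBefore w x) x = z := by
  rw [← Multiset.mem_coe, hu.1, Multiset.mem_sum]
  simp only [Finset.mem_range, Multiset.mem_coe, mem_blockWord_iff, mem_block_iff]
  constructor
  · rintro ⟨i, -, x, ⟨hx, hx1, rfl⟩, rfl⟩
    exact ⟨x, hx, hx1, rfl⟩
  · rintro ⟨x, hx, hx1, rfl⟩
    exact ⟨_, hw.zerosBefore_lt hx, x, ⟨hx, hx1, rfl⟩, rfl⟩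

theorem one_le_fst_and_snd_lt (hw : IsLinExt P w) (hu : IsColoredLinExt r w u) {z : ℕ × ℕ}
    (hz : z ∈ u) : 1 ≤ z.1 ∧ z.2 < r := by
  obtain ⟨x, hx, hx1, rfl⟩ := (hu.mem_iff hw).1 hz
  exact ⟨hx1, shiftLetter_snd_lt (P.pos_of_mem ((hw.2.1 x).1 hx))⟩

/-- The shifted letters have the values of the letters of `w`, which are distinct. -/
theorem nodup (hw : IsLinExt P w) (hu : IsColoredLinExt r w u) : u.Nodup := by
  have hfst : (↑(u.map Prod.fst) : Multiset ℕ) =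
      ↑((w.filter fun x => 1 ≤ x.1).map Prod.fst) := by
    rw [← Multiset.map_coe, ← Multiset.map_coe, hu.1, ← hw.sum_blocks, Multiset.map_finset_sum,
      Multiset.map_finset_sum]
    refine Finset.sum_congr rfl fun i _ => ?_
    simp [blockWord, Function.comp_def]
  refine Nodup.of_map Prod.fst (Multiset.coe_nodup.1 (hfst ▸ ?_))
  refine (nodup_map_iff_inj_on (hw.1.filter _)).2 fun x hx y hy hxy => ?_
  simp only [mem_filter, decide_eq_true_eq] at hx hy
  exact P.val_inj x ((hw.2.1 x).1 hx.1) y ((hw.2.1 y).1 hy.1) hx.2 hxy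

theorem pair_sublist (hw : IsLinExt P w) (hu : IsColoredLinExt r w u) {x y : ℕ × ℕ}
    (hxy : [x, y] <+ w) (hx1 : 1 ≤ x.1) (hy1 : 1 ≤ y.1)
    (hzb : zerosBefore w x = zerosBefore w y) :
    [shiftLetter r (zerosBefore w x) x, shiftLetter r (zerosBefore w x) y] <+ u := by
  have hblock : [x, y] <+ block w (zerosBefore w x) := by
    have := hxy.filter (fun z => decide (1 ≤ z.1 ∧ zerosBefore w z = zerosBefore w x))
    rwa [filter_cons_of_pos (by simp [hx1]), filter_cons_of_pos (by simp [hy1, hzb]),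
      filter_nil] at this
  exact (hblock.map _).trans (hu.2 _ (hw.zerosBefore_lt (hxy.subset (by simp))))

end IsColoredLinExt

theorem IsWordCPP.fst_eq_zero {r j : ℕ} {u : List (ℕ × ℕ)} {g : Fin u.length → ℕ × ℕ}
    (hg : IsWordCPP r j u g) (hu : ∀ z ∈ u, 1 ≤ z.1) (i : Fin u.length) : (g i).1 = 0 := by
  obtain ⟨hbd, -, -, hzle, hzlt, -⟩ := hg
  -- a part in a block `m ≥ 1` would have to be `(1, 0)`, and then lie strictly below `0_1`
  by_contra hne
  have hr : 1 < r := by have := (hbd i).1; omega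
  have h10 : g i = (1, 0) := by
    have := hzle i 1 le_rfl hr
    unfold partLE at this
    exact Prod.ext (by omega) (by omega)
  have := hzlt i 1 le_rfl hr (by rw [h10]) (by
    rw [shiftLetter_zero_symbol hr]; exact zero_letterLT (hu (u.get i) (u.get_mem i)))
  rw [h10] at this
  unfold partLT at this
  omega

theorem isWordCPP_iff {r j : ℕ} {u : List (ℕ × ℕ)} (hu : ∀ z ∈ u, 1 ≤ z.1 ∧ z.2 < r)
    (hnd : u.Nodup) (g : Fin u.length → ℕ × ℕ) :
    IsWordCPP r j u g ↔ (∀ i, (g i).1 = 0 ∧ (g i).2 ≤ j) ∧ (∀ i, (g i).2 = j → (u.get i).2 = 0) ∧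
      ∀ i k, i < k →
        toLex ((g i).2, letterKey (u.get i)) < toLex ((g k).2, letterKey (u.get k)) := by
  have hget := fun i => hu _ (u.get_mem i)
  have hshift : ∀ i, shiftLetter r 0 (u.get i) = u.get i := fun i => shiftLetter_zero (hget i).2
  constructor
  · intro hg
    have hfst := hg.fst_eq_zero fun z hz => (hu z hz).1
    obtain ⟨hbd, hle, hlt, -, -, hmax⟩ := hg
    refine ⟨fun i => ⟨hfst i, (hbd i).2⟩, fun i hi => hfst i ▸ hmax i hi, fun i k hik => ?_⟩
    have hv : (g i).2 ≤ (g k).2 := by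
      have h := hle i k hik; have := hfst i; have := hfst k; unfold partLE at h; omega
    rcases hv.lt_or_eq with hv | hv
    · exact Prod.Lex.toLex_lt_toLex.2 (Or.inl hv)
    refine Prod.Lex.toLex_lt_toLex.2 (Or.inr ⟨hv, letterKey_lt_letterKey.2 (letterLT_of_ne ?_ ?_)⟩)
    · exact fun h => hik.ne (hnd.get_inj_iff.1 h)
    · intro hki
      have h := hlt i k hik (by rw [hfst, hfst]) (by rwa [hfst, hshift, hshift])
      have := hfst i; have := hfst k
      unfold partLT at h
      omega
  · rintro ⟨hbd, hmax, hkey⟩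
    have hle : ∀ i k, i < k → (g i).2 ≤ (g k).2 := fun i k hik => by
      have := Prod.Lex.toLex_lt_toLex.1 (hkey i k hik); omega
    refine ⟨fun i => ⟨?_, (hbd i).2⟩, fun i k hik => ?_, fun i k hik _ hki => ?_,
      fun i m hm _ => ?_, fun i m hm _ hm' => ?_, fun i hi => ?_⟩
    · rw [(hbd i).1]; exact (Nat.zero_le _).trans_lt (hget i).2
    · exact Or.inr ⟨by rw [(hbd i).1, (hbd k).1], hle i k hik⟩
    · rw [(hbd i).1, hshift, hshift] at hki
      rcases Prod.Lex.toLex_lt_toLex.1 (hkey i k hik) with h | ⟨-, h⟩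
      · exact Or.inr ⟨by rw [(hbd i).1, (hbd k).1], h⟩
      · exact absurd (letterKey_lt_letterKey.2 hki) (lt_asymm h)
    · exact Or.inl (by rw [(hbd i).1]; omega)
    · have := (hbd i).1; omega
    · rw [hmax i hi, (hbd i).1]

def wordValue (u : List (ℕ × ℕ)) (g : Fin u.length → ℕ × ℕ) (z : ℕ × ℕ) : ℕ :=
  if h : u.idxOf z < u.length then (g ⟨u.idxOf z, h⟩).2 else 0

theorem wordValue_of_mem {u : List (ℕ × ℕ)} (g : Fin u.length → ℕ × ℕ) {z : ℕ × ℕ}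
    (hz : z ∈ u) : wordValue u g z = (g ⟨u.idxOf z, idxOf_lt_length_of_mem hz⟩).2 :=
  dif_pos _

theorem wordValue_get {u : List (ℕ × ℕ)} (hu : u.Nodup) (g : Fin u.length → ℕ × ℕ)
    (i : Fin u.length) : wordValue u g (u.get i) = (g i).2 := by
  rw [wordValue_of_mem g (u.get_mem i)]
  congr 2
  exact Fin.ext (by simp [hu])

theorem wordValue_le {r j : ℕ} {u : List (ℕ × ℕ)} {g : Fin u.length → ℕ × ℕ}
    (hg : IsWordCPP r j u g) (z : ℕ × ℕ) : wordValue u g z ≤ j := by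
  unfold wordValue
  split
  exacts [(hg.1 _).2, Nat.zero_le j]

namespace IsWordCPP

variable {r j : ℕ} {P : ColoredPoset r} {w u : List (ℕ × ℕ)} {g : Fin u.length → ℕ × ℕ}

theorem snd_eq_zero_of_eq (hg : IsWordCPP r j u g) (hw : IsLinExt P w)
    (hu : IsColoredLinExt r w u) {i : Fin u.length} (hi : (g i).2 = j) : (u.get i).2 = 0 :=
  ((isWordCPP_iff (fun _ => hu.one_le_fst_and_snd_lt hw) (hu.nodup hw) g).1 hg).2.1 i hi

theorem pairwise_wordValue (hg : IsWordCPP r j u g) (hw : IsLinExt P w)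
    (hu : IsColoredLinExt r w u) : u.Pairwise fun a b =>
      toLex (wordValue u g a, letterKey a) < toLex (wordValue u g b, letterKey b) := by
  have hkey := ((isWordCPP_iff (fun _ => hu.one_le_fst_and_snd_lt hw) (hu.nodup hw) g).1 hg).2.2
  refine pairwise_iff_getElem.2 fun i k hi hk hik => ?_
  have := hkey ⟨i, hi⟩ ⟨k, hk⟩ hik
  rwa [← wordValue_get (hu.nodup hw) g ⟨i, hi⟩, ← wordValue_get (hu.nodup hw) g ⟨k, hk⟩] at this

end IsWordCPP

namespace ColoredPoset

variable {r j : ℕ} (P : ColoredPoset r) (f : {x // x ∈ P.elems} → ℕ × ℕ)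

def extend (x : ℕ × ℕ) : ℕ × ℕ :=
  if h : x ∈ P.elems then f ⟨x, h⟩ else (0, 0)

/-- The letter `x^{(k)}`, where `X_k` is the block of the part of `x`. -/
def shifted (x : ℕ × ℕ) : ℕ × ℕ := shiftLetter r (P.extend f x).1 x

/-- The last component only makes the key injective. -/
def partKey : ℕ × ℕ ↪ (ℕ ×ₗ ℕ) ×ₗ (ℕ ×ₗ ℕ) ×ₗ (ℕ ×ₗ ℕ) :=
  ⟨fun x => toLex (toLex (P.extend f x), toLex (letterKey (P.shifted f x), letterKey x)),
    fun _ _ h => letterKey_injective (congrArg (fun k => (ofLex (ofLex k).2).2) h)⟩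

variable {P f}

theorem extend_of_mem {x : ℕ × ℕ} (hx : x ∈ P.elems) : P.extend f x = f ⟨x, hx⟩ := dif_pos hx

@[simp] theorem extend_val (x : {x // x ∈ P.elems}) : P.extend f x.1 = f x := extend_of_mem x.2

theorem partKey_lt_of_extend_lt {x y : ℕ × ℕ}
    (h : toLex (P.extend f x) < toLex (P.extend f y)) : P.partKey f x < P.partKey f y :=
  Prod.Lex.toLex_lt_toLex.2 (Or.inl h)

theorem partKey_lt_of_extend_le {x y : ℕ × ℕ} (hle : toLex (P.extend f x) ≤ toLex (P.extend f y))
    (heq : P.extend f x = P.extend f y → letterLT (P.shifted f x) (P.shifted f y)) :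
    P.partKey f x < P.partKey f y := by
  rcases hle.lt_or_eq with h | h
  · exact partKey_lt_of_extend_lt h
  · exact Prod.Lex.toLex_lt_toLex.2 (Or.inr ⟨h, Prod.Lex.toLex_lt_toLex.2
      (Or.inl (letterKey_lt_letterKey.2 (heq (toLex.injective h))))⟩)

theorem extend_le_of_partKey_lt {x y : ℕ × ℕ} (h : P.partKey f x < P.partKey f y) :
    toLex (P.extend f x) ≤ toLex (P.extend f y) := by
  rcases Prod.Lex.toLex_lt_toLex.1 h with h | ⟨h, -⟩
  exacts [h.le, h.le]

theorem not_shifted_lt_of_partKey_lt {x y : ℕ × ℕ} (h : P.partKey f x < P.partKey f y)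
    (he : P.extend f x = P.extend f y) : ¬ letterLT (P.shifted f y) (P.shifted f x) := by
  intro hlt
  rcases Prod.Lex.toLex_lt_toLex.1 h with h | ⟨-, h⟩
  · exact h.ne (congrArg toLex he)
  rcases Prod.Lex.toLex_lt_toLex.1 h with h | ⟨h, -⟩
  · exact lt_asymm h (letterKey_lt_letterKey.2 hlt)
  · exact (letterKey_lt_letterKey.2 hlt).ne h.symm

theorem apply_zero_symbol
    (hzero : ∀ m (h1 : 1 ≤ m) (h2 : m < r), f ⟨(0, m), P.zero_mem m h1 h2⟩ = (m, 0))
    {x : {x // x ∈ P.elems}} (h0 : x.1.1 = 0) : f x = (x.1.2, 0) := by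
  obtain ⟨h1, h2⟩ := P.zero_only x.1 x.2 h0
  rw [← hzero _ h1 h2]
  exact congrArg f (Subtype.ext (Prod.ext h0 rfl))

theorem eq_of_fst_eq
    (hzero : ∀ m (h1 : 1 ≤ m) (h2 : m < r), f ⟨(0, m), P.zero_mem m h1 h2⟩ = (m, 0))
    {x y : {x // x ∈ P.elems}} (h1 : x.1.1 = y.1.1) (hf : f x = f y) : x = y := by
  rcases Nat.eq_zero_or_pos x.1.1 with h0 | hpos
  · rw [apply_zero_symbol hzero h0, apply_zero_symbol hzero (h1 ▸ h0)] at hf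
    exact Subtype.ext (Prod.ext h1 (congrArg Prod.fst hf))
  · exact Subtype.ext (P.val_inj _ x.2 _ y.2 hpos h1)

theorem isCPP_iff : IsCPP r j P f ↔ (∀ x, (f x).1 < r ∧ (f x).2 ≤ j) ∧
    (∀ m (h1 : 1 ≤ m) (h2 : m < r), f ⟨(0, m), P.zero_mem m h1 h2⟩ = (m, 0)) ∧
    (∀ x y : {x // x ∈ P.elems}, P.rel x.1 y.1 → x ≠ y → P.partKey f x.1 < P.partKey f y.1) ∧
    (∀ x, (f x).2 = j → x.1.2 = (f x).1) := by
  refine ⟨fun ⟨hbd, hzero, hle, hlt, hmax⟩ => ⟨hbd, hzero, fun x y hxy hne => ?_, hmax⟩,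
    fun ⟨hbd, hzero, hkey, hmax⟩ => ⟨hbd, hzero, fun x y hxy => ?_, fun x y hxy hfst hyx => ?_,
      hmax⟩⟩
  · refine partKey_lt_of_extend_le (by simpa [partLE_iff_toLex_le] using hle x y hxy) fun he => ?_
    simp only [extend_val] at he
    refine letterLT_of_ne (fun hs => hne ?_) fun hyx => ?_
    · exact eq_of_fst_eq hzero (by simpa [shifted] using congrArg Prod.fst hs) he
    · have := hlt x y hxy (by rw [he]) (by simpa [shifted, he] using hyx)
      rw [partLT_iff_toLex_lt, he] at this
      exact lt_irrefl _ this
  · by_cases hne : x = y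
    · subst hne; exact partLE_iff_toLex_le.2 le_rfl
    · simpa [partLE_iff_toLex_le] using extend_le_of_partKey_lt (hkey x y hxy hne)
  · by_cases hne : x = y
    · subst hne; exact absurd (letterKey_lt_letterKey.2 hyx) (lt_irrefl _)
    have hk := hkey x y hxy hne
    rw [partLT_iff_toLex_lt]
    refine lt_of_le_of_ne (by simpa using extend_le_of_partKey_lt hk) fun he => ?_
    refine not_shifted_lt_of_partKey_lt hk (by simpa using toLex.injective he) ?_
    simpa [shifted, hfst] using hyx

end ColoredPoset

namespace ColoredPoset

variable {r j : ℕ} (P : ColoredPoset r) (f : {x // x ∈ P.elems} → ℕ × ℕ)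

noncomputable def linExtOf : List (ℕ × ℕ) := P.elems.sort (KeyLE (P.partKey f))

noncomputable def elemOfValue (z : ℕ × ℕ) : ℕ × ℕ :=
  if h : ∃ x ∈ P.elems, 1 ≤ x.1 ∧ x.1 = z.1 then h.choose else (0, 0)

noncomputable def valueOf (z : ℕ × ℕ) : ℕ := (P.extend f (P.elemOfValue z)).2

noncomputable def wordKey : ℕ × ℕ ↪ ℕ ×ₗ (ℕ ×ₗ ℕ) :=
  ⟨fun z => toLex (P.valueOf f z, letterKey z),
    fun _ _ h => letterKey_injective (congrArg (fun k => (ofLex k).2) h)⟩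

noncomputable def colLinExtOf : List (ℕ × ℕ) :=
  ((P.elems.filter (1 ≤ ·.1)).image (P.shifted f)).sort (KeyLE (P.wordKey f))

noncomputable def wordPartOf (i : Fin (P.colLinExtOf f).length) : ℕ × ℕ :=
  (0, P.valueOf f ((P.colLinExtOf f).get i))

variable {P f}

theorem elemOfValue_eq {x z : ℕ × ℕ} (hx : x ∈ P.elems) (hx1 : 1 ≤ x.1) (hxz : x.1 = z.1) :
    P.elemOfValue z = x := by
  have h : ∃ y ∈ P.elems, 1 ≤ y.1 ∧ y.1 = z.1 := ⟨x, hx, hx1, hxz⟩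
  obtain ⟨hy, hy1, hyz⟩ := h.choose_spec
  rw [elemOfValue, dif_pos h]
  exact P.val_inj _ hy _ hx hy1 (hyz.trans hxz.symm)

theorem valueOf_shifted {x : ℕ × ℕ} (hx : x ∈ P.elems) (hx1 : 1 ≤ x.1) :
    P.valueOf f (P.shifted f x) = (P.extend f x).2 := by
  rw [valueOf, elemOfValue_eq (z := P.shifted f x) hx hx1 rfl]

theorem pairwise_linExtOf : (P.linExtOf f).Pairwise (P.partKey f · < P.partKey f ·) :=
  ((Finset.sort_keyLE_eq_iff _ _).1 rfl).1

theorem mem_linExtOf {x : ℕ × ℕ} : x ∈ P.linExtOf f ↔ x ∈ P.elems := Finset.mem_sort _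

theorem pairwise_colLinExtOf : (P.colLinExtOf f).Pairwise (P.wordKey f · < P.wordKey f ·) :=
  ((Finset.sort_keyLE_eq_iff _ _).1 rfl).1

theorem mem_colLinExtOf {z : ℕ × ℕ} :
    z ∈ P.colLinExtOf f ↔ ∃ x ∈ P.elems, 1 ≤ x.1 ∧ P.shifted f x = z := by
  simp [colLinExtOf, and_assoc]

theorem extend_zero_symbol (hf : IsCPP r j P f) {m : ℕ} (hm1 : 1 ≤ m) (hmr : m < r) :
    P.extend f (0, m) = (m, 0) :=
  (extend_val ⟨(0, m), P.zero_mem m hm1 hmr⟩).trans (hf.2.1 m hm1 hmr)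

theorem isLinExt_linExtOf (hf : IsCPP r j P f) : IsLinExt P (P.linExtOf f) := by
  refine ⟨pairwise_linExtOf.nodup_of_key_lt, fun x => mem_linExtOf, fun x hx y hy hxy hne => ?_⟩
  rw [← pair_sublist_iff_idxOf_lt pairwise_linExtOf.nodup_of_key_lt (mem_linExtOf.2 hy),
    pairwise_linExtOf.pair_sublist_iff (mem_linExtOf.2 hx) (mem_linExtOf.2 hy)]
  exact (isCPP_iff.1 hf).2.2.1 ⟨x, hx⟩ ⟨y, hy⟩ hxy (fun h => hne (congrArg Subtype.val h))

theorem partKey_zero_symbol_lt_iff (hf : IsCPP r j P f) {x : ℕ × ℕ} (hx1 : 1 ≤ x.1) {m : ℕ}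
    (hm1 : 1 ≤ m) (hmr : m < r) :
    P.partKey f (0, m) < P.partKey f x ↔ m ≤ (P.extend f x).1 := by
  have h0 := extend_zero_symbol hf hm1 hmr
  constructor
  · intro h
    have := extend_le_of_partKey_lt h
    rw [h0, Prod.Lex.toLex_le_toLex] at this
    omega
  · intro h
    refine partKey_lt_of_extend_le (by rw [h0, Prod.Lex.toLex_le_toLex]; omega) fun _ => ?_
    rw [shifted, h0, shiftLetter_zero_symbol hmr]
    exact zero_letterLT hx1

theorem zerosBefore_linExtOf (hf : IsCPP r j P f) {x : ℕ × ℕ} (hx : x ∈ P.elems)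
    (hx1 : 1 ≤ x.1) : zerosBefore (P.linExtOf f) x = (P.extend f x).1 := by
  refine (isLinExt_linExtOf hf).zerosBefore_eq_of_forall (mem_linExtOf.2 hx)
    (extend_of_mem hx ▸ (hf.1 ⟨x, hx⟩).1) fun m hm1 hmr => ?_
  rw [pairwise_linExtOf.pair_sublist_iff (mem_linExtOf.2 (P.zero_mem m hm1 hmr))
    (mem_linExtOf.2 hx)]
  exact partKey_zero_symbol_lt_iff hf hx1 hm1 hmr

theorem blockWord_linExtOf (hf : IsCPP r j P f) (i : ℕ) :
    blockWord r (P.linExtOf f) i = (block (P.linExtOf f) i).map (P.shifted f) := by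
  refine map_congr_left fun x hx => ?_
  obtain ⟨hxw, hx1, rfl⟩ := mem_block_iff.1 hx
  rw [shifted, ← zerosBefore_linExtOf hf (mem_linExtOf.1 hxw) hx1]

theorem wordKey_shifted_lt {x y : ℕ × ℕ} (hx : x ∈ P.elems) (hy : y ∈ P.elems) (hx1 : 1 ≤ x.1)
    (hy1 : 1 ≤ y.1) (hblock : (P.extend f x).1 = (P.extend f y).1)
    (h : P.partKey f x < P.partKey f y) :
    P.wordKey f (P.shifted f x) < P.wordKey f (P.shifted f y) := by
  have hle := extend_le_of_partKey_lt h
  rw [Prod.Lex.toLex_le_toLex] at hle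
  change toLex (P.valueOf f _, _) < toLex (P.valueOf f _, _)
  rw [valueOf_shifted hx hx1, valueOf_shifted hy hy1, Prod.Lex.toLex_lt_toLex]
  rcases Nat.lt_or_ge (P.extend f x).2 (P.extend f y).2 with hv | hv
  · exact Or.inl hv
  have he : P.extend f x = P.extend f y := Prod.ext hblock (by omega)
  refine Or.inr ⟨by omega, letterKey_lt_letterKey.2 (letterLT_of_ne (fun hs => h.ne ?_)
    (not_shifted_lt_of_partKey_lt h he))⟩
  rw [P.val_inj x hx y hy hx1 (by simpa [shifted] using congrArg Prod.fst hs)]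

theorem isColoredLinExt_colLinExtOf (hf : IsCPP r j P f) :
    IsColoredLinExt r (P.linExtOf f) (P.colLinExtOf f) := by
  refine ⟨?_, fun i _ => ?_⟩
  · simp_rw [blockWord_linExtOf hf, ← Multiset.map_coe]
    rw [← Multiset.map_finset_sum, (isLinExt_linExtOf hf).sum_blocks, colLinExtOf, Finset.sort_eq,
      Finset.image_val_of_injOn fun x hx y hy h => P.val_inj x (Finset.mem_filter.1 hx).1 y
        (Finset.mem_filter.1 hy).1 (Finset.mem_filter.1 hx).2
        (by simpa [shifted] using congrArg Prod.fst h),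
      Finset.filter_val, ← Multiset.filter_coe, linExtOf, Finset.sort_eq]
  · rw [blockWord_linExtOf hf]
    refine sublist_of_subset_of_pairwise_lt ?_ pairwise_colLinExtOf ?_
    · rw [pairwise_map]
      refine (pairwise_linExtOf.sublist filter_sublist).imp_of_mem fun hx hy h => ?_
      obtain ⟨hxw, hx1, hxi⟩ := mem_block_iff.1 hx
      obtain ⟨hyw, hy1, hyi⟩ := mem_block_iff.1 hy
      refine wordKey_shifted_lt (mem_linExtOf.1 hxw) (mem_linExtOf.1 hyw) hx1 hy1 ?_ h
      rw [← zerosBefore_linExtOf hf (mem_linExtOf.1 hxw) hx1,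
        ← zerosBefore_linExtOf hf (mem_linExtOf.1 hyw) hy1, hxi, hyi]
    · intro z hz
      obtain ⟨x, hx, rfl⟩ := mem_map.1 hz
      obtain ⟨hxw, hx1, -⟩ := mem_block_iff.1 hx
      exact mem_colLinExtOf.2 ⟨x, mem_linExtOf.1 hxw, hx1, rfl⟩

theorem isWordCPP_wordPartOf (hf : IsCPP r j P f) :
    IsWordCPP r j (P.colLinExtOf f) (P.wordPartOf f) := by
  have hget : ∀ i, ∃ x ∈ P.elems, 1 ≤ x.1 ∧ P.shifted f x = (P.colLinExtOf f).get i :=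
    fun i => mem_colLinExtOf.1 (get_mem _ i)
  have hbd : ∀ z ∈ P.colLinExtOf f, 1 ≤ z.1 ∧ z.2 < r := fun z hz => by
    obtain ⟨x, hx, hx1, rfl⟩ := mem_colLinExtOf.1 hz
    exact ⟨hx1, shiftLetter_snd_lt (P.pos_of_mem hx)⟩
  refine (isWordCPP_iff hbd pairwise_colLinExtOf.nodup_of_key_lt _).2
    ⟨fun i => ⟨rfl, ?_⟩, fun i hi => ?_, fun i k hik => ?_⟩
  · obtain ⟨x, hx, hx1, hxi⟩ := hget i
    change P.valueOf f ((P.colLinExtOf f).get i) ≤ j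
    rw [← hxi, valueOf_shifted hx hx1, extend_of_mem hx]
    exact (hf.1 ⟨x, hx⟩).2
  · obtain ⟨x, hx, hx1, hxi⟩ := hget i
    change P.valueOf f ((P.colLinExtOf f).get i) = j at hi
    rw [← hxi, valueOf_shifted hx hx1, extend_of_mem hx] at hi
    rw [← hxi, shifted, extend_of_mem hx]
    exact (shiftLetter_snd_eq_zero_iff (P.col_lt x hx) (hf.1 ⟨x, hx⟩).1).2
      (hf.2.2.2.2 ⟨x, hx⟩ hi)
  · exact pairwise_iff_getElem.1 pairwise_colLinExtOf i k i.2 k.2 hik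

end ColoredPoset

def partOfTriple (r : ℕ) (w u : List (ℕ × ℕ)) (g : Fin u.length → ℕ × ℕ) (x : ℕ × ℕ) : ℕ × ℕ :=
  if x.1 = 0 then (x.2, 0)
  else (zerosBefore w x, wordValue u g (shiftLetter r (zerosBefore w x) x))

section partOfTriple

variable {r : ℕ} {w u : List (ℕ × ℕ)} {g : Fin u.length → ℕ × ℕ} {x : ℕ × ℕ}

theorem partOfTriple_of_fst_eq_zero (hx0 : x.1 = 0) : partOfTriple r w u g x = (x.2, 0) :=
  if_pos hx0

theorem partOfTriple_of_one_le_fst (hx1 : 1 ≤ x.1) : partOfTriple r w u g x =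
    (zerosBefore w x, wordValue u g (shiftLetter r (zerosBefore w x) x)) :=
  if_neg (by omega)

end partOfTriple

namespace ColoredPoset

variable {r j : ℕ} {P : ColoredPoset r} {w u : List (ℕ × ℕ)} {g : Fin u.length → ℕ × ℕ}
  {x y : ℕ × ℕ}

theorem extend_partOfTriple (hx : x ∈ P.elems) :
    P.extend (partOfTriple r w u g ∘ Subtype.val) x = partOfTriple r w u g x :=
  extend_of_mem hx

theorem shifted_partOfTriple (hx : x ∈ P.elems) (hx1 : 1 ≤ x.1) :
    P.shifted (partOfTriple r w u g ∘ Subtype.val) x = shiftLetter r (zerosBefore w x) x := by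
  rw [shifted, extend_partOfTriple hx, partOfTriple_of_one_le_fst hx1]

theorem partKey_partOfTriple_lt_of_fst_eq_zero (hw : IsLinExt P w) (hxy : [x, y] <+ w)
    (hx0 : x.1 = 0) : P.partKey (partOfTriple r w u g ∘ Subtype.val) x <
      P.partKey (partOfTriple r w u g ∘ Subtype.val) y := by
  have hyw : y ∈ w := hxy.subset (by simp)
  have hx := (hw.2.1 x).1 (hxy.subset (by simp))
  have hy := (hw.2.1 y).1 hyw
  obtain ⟨hm1, hmr⟩ := P.zero_only x hx hx0
  have hxm : x = (0, x.2) := Prod.ext hx0 rfl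
  have ex : P.extend (partOfTriple r w u g ∘ Subtype.val) x = (x.2, 0) := by
    rw [extend_partOfTriple hx, partOfTriple_of_fst_eq_zero hx0]
  rcases Nat.eq_zero_or_pos y.1 with hy0 | hy1
  · refine partKey_lt_of_extend_lt ?_
    rw [ex, extend_partOfTriple hy, partOfTriple_of_fst_eq_zero hy0, Prod.Lex.toLex_lt_toLex]
    exact Or.inl (hw.snd_lt_of_pair_sublist hx0 hy0 hxy)
  have hle := (hw.le_zerosBefore_iff hyw hm1 hmr).2 (hxm ▸ hxy)
  refine partKey_lt_of_extend_le ?_ fun _ => ?_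
  · rw [ex, extend_partOfTriple hy, partOfTriple_of_one_le_fst hy1, Prod.Lex.toLex_le_toLex]
    omega
  · rw [shifted_partOfTriple hy hy1, shifted, ex, hxm, shiftLetter_zero_symbol hmr]
    exact zero_letterLT hy1

theorem partKey_partOfTriple_lt_of_one_le_fst (hw : IsLinExt P w) (hu : IsColoredLinExt r w u)
    (hg : IsWordCPP r j u g) (hxy : [x, y] <+ w) (hx1 : 1 ≤ x.1) :
    P.partKey (partOfTriple r w u g ∘ Subtype.val) x <
      P.partKey (partOfTriple r w u g ∘ Subtype.val) y := by
  have hxw : x ∈ w := hxy.subset (by simp)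
  have hx := (hw.2.1 x).1 hxw
  have hy := (hw.2.1 y).1 (hxy.subset (by simp))
  have ex : P.extend (partOfTriple r w u g ∘ Subtype.val) x =
      (zerosBefore w x, wordValue u g (shiftLetter r (zerosBefore w x) x)) := by
    rw [extend_partOfTriple hx, partOfTriple_of_one_le_fst hx1]
  rcases Nat.eq_zero_or_pos y.1 with hy0 | hy1
  · obtain ⟨hm1, hmr⟩ := P.zero_only y hy hy0
    have hlt : ¬ y.2 ≤ zerosBefore w x := fun h => not_pair_sublist_of_pair_sublist hw.1 hxy
      ((show y = (0, y.2) from Prod.ext hy0 rfl) ▸ (hw.le_zerosBefore_iff hxw hm1 hmr).1 h)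
    refine partKey_lt_of_extend_lt ?_
    rw [ex, extend_partOfTriple hy, partOfTriple_of_fst_eq_zero hy0, Prod.Lex.toLex_lt_toLex]
    omega
  have ey : P.extend (partOfTriple r w u g ∘ Subtype.val) y =
      (zerosBefore w y, wordValue u g (shiftLetter r (zerosBefore w y) y)) := by
    rw [extend_partOfTriple hy, partOfTriple_of_one_le_fst hy1]
  rcases (zerosBefore_mono hw.1 hxy).lt_or_eq with hlt | heq
  · exact partKey_lt_of_extend_lt (by rw [ex, ey, Prod.Lex.toLex_lt_toLex]; exact Or.inl hlt)
  -- same block: compare in `π`, where `g` increases the key `(value, letter)`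
  have hword := (hg.pairwise_wordValue hw hu).forall_sublist (hu.pair_sublist hw hxy hx1 hy1 heq)
  rw [Prod.Lex.toLex_lt_toLex] at hword
  rw [← heq] at ey
  refine partKey_lt_of_extend_le (by rw [ex, ey, Prod.Lex.toLex_le_toLex]; omega) fun he => ?_
  rw [ex, ey, Prod.mk.injEq] at he
  rw [shifted_partOfTriple hx hx1, shifted_partOfTriple hy hy1, ← heq]
  rcases hword with h | ⟨-, h⟩
  · omega
  · exact letterKey_lt_letterKey.1 h

theorem partKey_partOfTriple_lt (hw : IsLinExt P w) (hu : IsColoredLinExt r w u)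
    (hg : IsWordCPP r j u g) (hxy : [x, y] <+ w) :
    P.partKey (partOfTriple r w u g ∘ Subtype.val) x <
      P.partKey (partOfTriple r w u g ∘ Subtype.val) y := by
  rcases Nat.eq_zero_or_pos x.1 with hx0 | hx1
  exacts [partKey_partOfTriple_lt_of_fst_eq_zero hw hxy hx0,
    partKey_partOfTriple_lt_of_one_le_fst hw hu hg hxy hx1]

theorem partOfTriple_lt_and_le (hw : IsLinExt P w) (hg : IsWordCPP r j u g) (hx : x ∈ P.elems) :
    (partOfTriple r w u g x).1 < r ∧ (partOfTriple r w u g x).2 ≤ j := by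
  rcases Nat.eq_zero_or_pos x.1 with hx0 | hx1
  · rw [partOfTriple_of_fst_eq_zero hx0]
    exact ⟨(P.zero_only x hx hx0).2, Nat.zero_le j⟩
  · rw [partOfTriple_of_one_le_fst hx1]
    exact ⟨hw.zerosBefore_lt ((hw.2.1 _).2 hx), wordValue_le hg _⟩

theorem snd_eq_fst_partOfTriple (hw : IsLinExt P w) (hu : IsColoredLinExt r w u)
    (hg : IsWordCPP r j u g) (hx : x ∈ P.elems) (hj : (partOfTriple r w u g x).2 = j) :
    x.2 = (partOfTriple r w u g x).1 := by
  rcases Nat.eq_zero_or_pos x.1 with hx0 | hx1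
  · rw [partOfTriple_of_fst_eq_zero hx0]
  rw [partOfTriple_of_one_le_fst hx1] at hj ⊢
  have hz := (hu.mem_iff hw).2 ⟨x, (hw.2.1 _).2 hx, hx1, rfl⟩
  rw [wordValue_of_mem g hz] at hj
  have := hg.snd_eq_zero_of_eq hw hu hj
  rw [get_eq_getElem, getElem_idxOf] at this
  exact (shiftLetter_snd_eq_zero_iff (P.col_lt _ hx) (hw.zerosBefore_lt ((hw.2.1 _).2 hx))).1 this

theorem isCPP_partOfTriple (hw : IsLinExt P w) (hu : IsColoredLinExt r w u)
    (hg : IsWordCPP r j u g) : IsCPP r j P (partOfTriple r w u g ∘ Subtype.val) :=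
  isCPP_iff.2 ⟨fun x => partOfTriple_lt_and_le hw hg x.2,
    fun _ _ _ => partOfTriple_of_fst_eq_zero rfl,
    fun x y hxy hne => partKey_partOfTriple_lt hw hu hg
      (hw.pair_sublist_of_rel x.2 y.2 hxy (Subtype.val_injective.ne hne)),
    fun x hj => snd_eq_fst_partOfTriple hw hu hg x.2 hj⟩

theorem linExtOf_partOfTriple (hw : IsLinExt P w) (hu : IsColoredLinExt r w u)
    (hg : IsWordCPP r j u g) : P.linExtOf (partOfTriple r w u g ∘ Subtype.val) = w :=
  (Finset.sort_keyLE_eq_iff _ _).2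
    ⟨pairwise_of_forall_sublist (partKey_partOfTriple_lt hw hu hg), hw.2.1⟩

theorem valueOf_partOfTriple (hw : IsLinExt P w) (hu : IsColoredLinExt r w u) {z : ℕ × ℕ}
    (hz : z ∈ u) : P.valueOf (partOfTriple r w u g ∘ Subtype.val) z = wordValue u g z := by
  obtain ⟨x, hxw, hx1, rfl⟩ := (hu.mem_iff hw).1 hz
  have hx := (hw.2.1 x).1 hxw
  rw [valueOf, elemOfValue_eq (z := shiftLetter r _ x) hx hx1 rfl,
    extend_partOfTriple hx, partOfTriple_of_one_le_fst hx1]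

theorem colLinExtOf_partOfTriple (hw : IsLinExt P w) (hu : IsColoredLinExt r w u)
    (hg : IsWordCPP r j u g) : P.colLinExtOf (partOfTriple r w u g ∘ Subtype.val) = u := by
  refine (Finset.sort_keyLE_eq_iff _ _).2 ⟨(hg.pairwise_wordValue hw hu).imp_of_mem
    fun ha hb h => ?_, fun z => ?_⟩
  · change toLex (P.valueOf _ _, _) < toLex (P.valueOf _ _, _)
    rwa [valueOf_partOfTriple hw hu ha, valueOf_partOfTriple hw hu hb]
  · rw [hu.mem_iff hw, ← Finset.mem_sort (KeyLE (P.wordKey _)), ← colLinExtOf, mem_colLinExtOf]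
    constructor
    · rintro ⟨x, hxw, hx1, rfl⟩
      exact ⟨x, (hw.2.1 x).1 hxw, hx1, shifted_partOfTriple ((hw.2.1 x).1 hxw) hx1⟩
    · rintro ⟨x, hx, hx1, rfl⟩
      exact ⟨x, (hw.2.1 x).2 hx, hx1, (shifted_partOfTriple hx hx1).symm⟩

variable {f : {x // x ∈ P.elems} → ℕ × ℕ}

theorem wordValue_wordPartOf {z : ℕ × ℕ} (hz : z ∈ P.colLinExtOf f) :
    wordValue (P.colLinExtOf f) (P.wordPartOf f) z = P.valueOf f z := by
  rw [wordValue_of_mem _ hz, wordPartOf, idxOf_get]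

theorem partOfTriple_linExtOf (hf : IsCPP r j P f) (x : {x // x ∈ P.elems}) :
    partOfTriple r (P.linExtOf f) (P.colLinExtOf f) (P.wordPartOf f) x.1 = f x := by
  rw [partOfTriple]
  split
  · exact (apply_zero_symbol hf.2.1 ‹_›).symm
  have hx1 : 1 ≤ x.1.1 := by omega
  have hzb := zerosBefore_linExtOf hf x.2 hx1
  rw [extend_val] at hzb
  have hmem : P.shifted f x.1 ∈ P.colLinExtOf f := mem_colLinExtOf.2 ⟨x.1, x.2, hx1, rfl⟩
  rw [hzb, show shiftLetter r (f x).1 x.1 = P.shifted f x.1 by rw [shifted, extend_val],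
    wordValue_wordPartOf hmem, valueOf_shifted x.2 hx1, extend_val]

end ColoredPoset

instance (r j : ℕ) (u : List (ℕ × ℕ)) :
    Finite {g : Fin u.length → ℕ × ℕ // IsWordCPP r j u g} :=
  Finite.of_injective (β := Fin u.length → Fin r × Fin (j + 1))
    (fun g i => (⟨(g.1 i).1, (g.2.1 i).1⟩, ⟨(g.1 i).2, Nat.lt_succ_of_le (g.2.1 i).2⟩))
    fun _ _ h => Subtype.ext (funext fun i => Prod.ext
      (congrArg (fun p => (p.1 : ℕ)) (congrFun h i)) (congrArg (fun p => (p.2 : ℕ)) (congrFun h i)))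

namespace ColoredPoset

def Triple (r j : ℕ) (P : ColoredPoset r) : Type :=
  Σ w : {w // w ∈ LinExts P}, Σ u : {u // u ∈ ColLinExts r w.1},
    {g : Fin u.1.length → ℕ × ℕ // IsWordCPP r j u.1 g}

theorem Triple.ext {r j : ℕ} {P : ColoredPoset r} {t t' : Triple r j P} (hw : t.1.1 = t'.1.1)
    (hu : t.2.1.1 = t'.2.1.1)
    (hg : ∀ i (hi : i < t.2.1.1.length) (hi' : i < t'.2.1.1.length),
      t.2.2.1 ⟨i, hi⟩ = t'.2.2.1 ⟨i, hi'⟩) : t = t' := by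
  obtain ⟨⟨w, _⟩, ⟨u, _⟩, ⟨g, _⟩⟩ := t
  obtain ⟨⟨w', _⟩, ⟨u', _⟩, ⟨g', _⟩⟩ := t'
  dsimp only at hw hu hg
  subst hw hu
  obtain rfl : g = g' := funext fun i => hg i i.2 i.2
  rfl

noncomputable def equivTriple (r j : ℕ) (P : ColoredPoset r) :
    {f : {x // x ∈ P.elems} → ℕ × ℕ // IsCPP r j P f} ≃ Triple r j P where
  toFun f := ⟨⟨P.linExtOf f.1, mem_linExts_iff.2 (isLinExt_linExtOf f.2)⟩,
    ⟨P.colLinExtOf f.1, mem_colLinExts_iff.2 (isColoredLinExt_colLinExtOf f.2)⟩,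
    ⟨P.wordPartOf f.1, isWordCPP_wordPartOf f.2⟩⟩
  invFun t := ⟨partOfTriple r t.1.1 t.2.1.1 t.2.2.1 ∘ Subtype.val,
    isCPP_partOfTriple (mem_linExts_iff.1 t.1.2) (mem_colLinExts_iff.1 t.2.1.2) t.2.2.2⟩
  left_inv f := Subtype.ext (funext (partOfTriple_linExtOf f.2))
  right_inv := by
    rintro ⟨⟨w, hw⟩, ⟨u, hu⟩, ⟨g, hg⟩⟩
    rw [mem_linExts_iff] at hw
    rw [mem_colLinExts_iff] at hu
    have hU := colLinExtOf_partOfTriple hw hu hg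
    refine Triple.ext (linExtOf_partOfTriple hw hu hg) hU fun i hi hi' => ?_
    change (0, P.valueOf _ ((P.colLinExtOf _).get ⟨i, hi⟩)) = g ⟨i, hi'⟩
    rw [get_of_eq hU, valueOf_partOfTriple hw hu (get_mem _ _), wordValue_get (hu.nodup hw)]
    exact Prod.ext (hg.fst_eq_zero (fun z hz => (hu.one_le_fst_and_snd_lt hw hz).1) _).symm rfl

theorem card_triple (r j : ℕ) (P : ColoredPoset r) :
    Nat.card (Triple r j P) = ∑ w ∈ LinExts P, ∑ u ∈ ColLinExts r w, OmegaWord r j u := by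
  rw [Triple, Nat.card_sigma, ← Finset.sum_coe_sort (LinExts P)]
  refine Finset.sum_congr rfl fun w _ => ?_
  rw [Nat.card_sigma, ← Finset.sum_coe_sort (ColLinExts r w.1)]
  rfl

end ColoredPoset

theorem omega_eq_sum_colored_linext_general (r : ℕ) (P : ColoredPoset r) (j : ℕ) :
    Omega r j P = ∑ w ∈ LinExts P, ∑ u ∈ ColLinExts r w, OmegaWord r j u :=
  (Nat.card_congr (P.equivTriple r j)).trans (P.card_triple r j)

/-- Corollary of the Fundamental Theorem of Colored `P`-partitions:
`Ω_P(j) = Σ_{w ∈ L(P)} Σ_{π ∈ CL(w)} Ω_π(j)`. -/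
theorem omega_eq_sum_colored_linext (r n : ℕ) (hr : 1 ≤ r) (hn : 1 ≤ n)
    (P : ColoredPoset r) (j : ℕ) :
    Omega r j P = ∑ w ∈ LinExts P, ∑ u ∈ ColLinExts r w, OmegaWord r j u :=
  omega_eq_sum_colored_linext_general r P j
end

section
/- If π = (σ, c) ∈ G_{r,n} is monochromatic, i.e. c(1) = c(2) = ⋯ = c(n), then for every integer j ≥ 0, Ω_{P(π)}(j) = binomial(r·j + n − intdes(π), n). -/
open scoped BigOperators

/-- The colored permutation group `G_{r,n}`. -/
@[ext] structure ColoredPerm (r n : ℕ) where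
  perm : Equiv.Perm (Fin n)
  col : Fin n → ZMod r

namespace ColoredPerm

variable {r n : ℕ}

instance : Mul (ColoredPerm r n) :=
  ⟨fun a b => ⟨a.perm * b.perm, fun i => a.col (b.perm i) + b.col i⟩⟩

instance : One (ColoredPerm r n) :=
  ⟨⟨1, fun _ => 0⟩⟩

instance : Inv (ColoredPerm r n) :=
  ⟨fun a => ⟨a.perm⁻¹, fun i => -a.col (a.perm⁻¹ i)⟩⟩

instance : Group (ColoredPerm r n) where
  mul_assoc a b c := by
    refine ColoredPerm.ext (mul_assoc _ _ _) ?_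
    funext i
    show a.col (b.perm (c.perm i)) + b.col (c.perm i) + c.col i
        = a.col ((b.perm * c.perm) i) + (b.col (c.perm i) + c.col i)
    rw [Equiv.Perm.mul_apply, add_assoc]
  one_mul a := by
    refine ColoredPerm.ext (one_mul _) ?_
    funext i
    show (0 : ZMod r) + a.col i = a.col i
    rw [zero_add]
  mul_one a := by
    refine ColoredPerm.ext (mul_one _) ?_
    funext i
    show a.col ((1 : Equiv.Perm (Fin n)) i) + 0 = a.col i
    simp
  inv_mul_cancel a := by
    refine ColoredPerm.ext (inv_mul_cancel _) ?_
    funext i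
    show -a.col (a.perm⁻¹ (a.perm i)) + a.col i = 0
    simp

/-- `ColoredPerm r n` is equivalent (as a type) to a product. -/
def toProd : ColoredPerm r n ≃ Equiv.Perm (Fin n) × (Fin n → ZMod r) where
  toFun a := (a.perm, a.col)
  invFun p := ⟨p.1, p.2⟩
  left_inv _ := rfl
  right_inv _ := rfl

instance [NeZero r] : Fintype (ColoredPerm r n) := Fintype.ofEquiv _ toProd.symm

instance : DecidableEq (ColoredPerm r n) := toProd.decidableEq

/-- The `i`-th letter of the one-line notation (0-indexed), as a pair (value, color);
for `i = n` this is the sentinel letter `0₁`. Values are in `{1, …, n}`. -/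
def letterAt (a : ColoredPerm r n) (i : ℕ) : ℕ × ℕ :=
  if h : i < n then ((a.perm ⟨i, h⟩ : ℕ) + 1, (a.col ⟨i, h⟩).val) else (0, 1)

/-- The descent set of a colored permutation (positions 0-indexed: position `i`
corresponds to the paper's `i+1 ∈ {1, …, n}`). -/
def Des (a : ColoredPerm r n) : Finset (Fin n) :=
  Finset.univ.filter fun i : Fin n => letterLT (letterAt a (i.1 + 1)) (letterAt a i.1)

/-- The descent number. -/
def des (a : ColoredPerm r n) : ℕ := (Des a).card

/-- The internal descent number `|Des(π) ∩ {1, …, n−1}|`. -/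
def intdes (a : ColoredPerm r n) : ℕ :=
  ((Des a).filter fun i : Fin n => i.1 + 1 < n).card

end ColoredPerm

/-- The `i`-th letter `π(i)` of a colored permutation, as a pair (value, color)
with value in `{1, …, n}`. -/
def letterOf {r n : ℕ} (a : ColoredPerm r n) (i : Fin n) : ℕ × ℕ :=
  ((a.perm i : ℕ) + 1, (a.col i).val)

/-- The one-line notation of a colored permutation, as a word of colored letters. -/
def word {r n : ℕ} (a : ColoredPerm r n) : List (ℕ × ℕ) :=
  List.ofFn (letterOf a)

/-- A colored `P(π)`-partition with parts in `[0,j]_{(r)}`, where `P(π)` is the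
disjoint union of the two chains `π(1) ≺ ⋯ ≺ π(n)` and `0_1 ≺ ⋯ ≺ 0_{r−1}`;
`f i` is the value at `π(i)` (the forced values of the zeros are omitted, and no
conditions relate the two chains). -/
def IsPPart (r n j : ℕ) (a : ColoredPerm r n) (f : Fin n → ℕ × ℕ) : Prop :=
  (∀ i, (f i).1 < r ∧ (f i).2 ≤ j) ∧
  (∀ (i : ℕ) (h : i + 1 < n),
      partLE (f ⟨i, Nat.lt_of_succ_lt h⟩) (f ⟨i + 1, h⟩)) ∧
  (∀ (i : ℕ) (h : i + 1 < n),
      (f ⟨i, Nat.lt_of_succ_lt h⟩).1 = (f ⟨i + 1, h⟩).1 →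
      letterLT
        (shiftLetter r (f ⟨i, Nat.lt_of_succ_lt h⟩).1 (letterOf a ⟨i + 1, h⟩))
        (shiftLetter r (f ⟨i, Nat.lt_of_succ_lt h⟩).1
          (letterOf a ⟨i, Nat.lt_of_succ_lt h⟩)) →
      partLT (f ⟨i, Nat.lt_of_succ_lt h⟩) (f ⟨i + 1, h⟩)) ∧
  (∀ i, (f i).2 = j → (a.col i).val = (f i).1)

/-- The order polynomial `Ω_{P(π)}(j)`. -/
noncomputable def OmegaP (r n j : ℕ) (a : ColoredPerm r n) : ℕ :=
  Nat.card {f : Fin n → ℕ × ℕ // IsPPart r n j a f}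

/-!
For a monochromatic `π` all the letters compared in the definition of a `P(π)`-partition have
the same color, so strictness is forced exactly at the internal descents of `σ`. Moreover the
parts available to every letter form one chain: the `r * j` pairs `(k, u)` with `u < j`, and
`(c, j)` for the common color `c`. A `P(π)`-partition is therefore a weakly increasing sequence
in a chain with `r * j + 1` elements that increases strictly at the `intdes π` descents. Adding
to its `i`-th term the number of non-descents before `i` turns such sequences bijectively into
strictly increasing sequences in a chain with `r * j + n - intdes π` elements, i.e. into
`n`-subsets of it.
-/

open Finset

section MonotoneStrictAt

variable {n : ℕ} (p : ℕ → Prop)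

def MonotoneStrictAt {α : Type*} [Preorder α] (g : Fin n → α) : Prop :=
  ∀ (i : ℕ) (h : i + 1 < n),
    g ⟨i, Nat.lt_of_succ_lt h⟩ ≤ g ⟨i + 1, h⟩ ∧ (p i → g ⟨i, Nat.lt_of_succ_lt h⟩ < g ⟨i + 1, h⟩)

theorem Fin.strictMono_iff_lt_add_one {α : Type*} [Preorder α] {f : Fin n → α} :
    StrictMono f ↔ ∀ (i : ℕ) (h : i + 1 < n), f ⟨i, Nat.lt_of_succ_lt h⟩ < f ⟨i + 1, h⟩ := by
  cases n with
  | zero => exact iff_of_true (fun i => i.elim0) (fun _ h => by omega)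
  | succ m =>
    rw [Fin.strictMono_iff_lt_succ]
    exact ⟨fun hf i h => hf ⟨i, by omega⟩, fun hf i => hf i (by omega)⟩

theorem Fin.monotone_iff_le_add_one {α : Type*} [Preorder α] {f : Fin n → α} :
    Monotone f ↔ ∀ (i : ℕ) (h : i + 1 < n), f ⟨i, Nat.lt_of_succ_lt h⟩ ≤ f ⟨i + 1, h⟩ := by
  cases n with
  | zero => exact iff_of_true (fun i => i.elim0) (fun _ h => by omega)
  | succ m =>
    rw [Fin.monotone_iff_le_succ]
    exact ⟨fun hf i h => hf ⟨i, by omega⟩, fun hf i => hf i (by omega)⟩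

theorem Fin.val_le_of_strictMono {f : Fin n → ℕ} (hf : StrictMono f) (i : Fin n) :
    (i : ℕ) ≤ f i := by
  obtain ⟨i, hi⟩ := i
  induction i with
  | zero => exact Nat.zero_le _
  | succ k ih => exact (ih (by omega)).trans_lt (hf (Fin.mk_lt_mk.2 k.lt_succ_self))

variable {p}

theorem MonotoneStrictAt.monotone {α : Type*} [Preorder α] {g : Fin n → α}
    (hg : MonotoneStrictAt p g) : Monotone g :=
  Fin.monotone_iff_le_add_one.2 fun i h => (hg i h).1

theorem monotoneStrictAt_comp_iff {α β : Type*} [Preorder α] [Preorder β] (e : α ↪o β)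
    {g : Fin n → α} : MonotoneStrictAt p (e ∘ g) ↔ MonotoneStrictAt p g := by
  simp only [MonotoneStrictAt, Function.comp_apply, e.le_iff_le, e.lt_iff_lt]

variable (p) [DecidablePred p]

def numWeakBelow (i : ℕ) : ℕ := #{t ∈ range i | ¬ p t}

theorem numWeakBelow_add_one (i : ℕ) :
    numWeakBelow p (i + 1) = numWeakBelow p i + if p i then 0 else 1 := by
  by_cases h : p i <;> simp [numWeakBelow, range_add_one, filter_insert, h]

theorem numWeakBelow_add_card_filter (i : ℕ) : numWeakBelow p i + #{t ∈ range i | p t} = i := by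
  rw [numWeakBelow, add_comm, card_filter_add_card_filter_not, card_range]

theorem numWeakBelow_le_self (i : ℕ) : numWeakBelow p i ≤ i :=
  (card_filter_le _ _).trans (card_range i).le

theorem numWeakBelow_mono : Monotone (numWeakBelow p) := fun _ _ h =>
  card_le_card (filter_subset_filter _ (range_subset_range.2 h))

variable {p}

theorem monotoneStrictAt_iff_strictMono_add {g : Fin n → ℕ} :
    MonotoneStrictAt p g ↔ StrictMono fun i : Fin n => g i + numWeakBelow p i := by
  rw [Fin.strictMono_iff_lt_add_one]
  refine forall₂_congr fun i _ => ?_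
  rw [numWeakBelow_add_one, ← add_assoc]
  by_cases h : p i
  · simpa [h] using le_of_lt
  · simp [h]

theorem numWeakBelow_le_of_strictMono {H : Fin n → ℕ} (hH : StrictMono H) (i : Fin n) :
    numWeakBelow p i ≤ H i :=
  (numWeakBelow_le_self p i).trans (Fin.val_le_of_strictMono hH i)

theorem monotoneStrictAt_sub_numWeakBelow {H : Fin n → ℕ} (hH : StrictMono H) :
    MonotoneStrictAt p fun i : Fin n => H i - numWeakBelow p i := by
  refine monotoneStrictAt_iff_strictMono_add.2 ?_
  simpa only [Nat.sub_add_cancel (numWeakBelow_le_of_strictMono hH _)] using hH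

end MonotoneStrictAt

section Counting

variable {n : ℕ} {p : ℕ → Prop} [DecidablePred p]

theorem sub_numWeakBelow_lt {N : ℕ} {H : Fin n → ℕ} (hH : StrictMono H)
    (hlt : ∀ i, H i < N + numWeakBelow p (n - 1)) (i : Fin n) : H i - numWeakBelow p i < N := by
  have hlast : n - 1 < n := Nat.sub_one_lt_of_lt i.2
  have hi : i ≤ ⟨n - 1, hlast⟩ := Nat.le_sub_one_of_lt i.2
  have : H i - numWeakBelow p i ≤ H ⟨n - 1, hlast⟩ - numWeakBelow p (n - 1) :=
    (monotoneStrictAt_sub_numWeakBelow hH).monotone hi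
  have := hlt ⟨n - 1, hlast⟩
  have : numWeakBelow p (n - 1) ≤ H ⟨n - 1, hlast⟩ :=
    numWeakBelow_le_of_strictMono hH ⟨n - 1, hlast⟩
  omega

variable (p) in
def shiftEquiv (N : ℕ) :
    {g : Fin n → Fin N // MonotoneStrictAt p g} ≃ (Fin n ↪o Fin (N + numWeakBelow p (n - 1))) where
  toFun g := OrderEmbedding.ofStrictMono
    (fun i => ⟨g.1 i + numWeakBelow p i, by
      have := numWeakBelow_mono p (show (i : ℕ) ≤ n - 1 by omega)
      omega⟩)
    (monotoneStrictAt_iff_strictMono_add.1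
      ((monotoneStrictAt_comp_iff (Fin.valOrderEmb N)).2 g.2))
  invFun H := ⟨fun i => ⟨H i - numWeakBelow p i,
      sub_numWeakBelow_lt (Fin.val_strictMono.comp H.strictMono) (fun i => (H i).2) i⟩,
    (monotoneStrictAt_comp_iff (Fin.valOrderEmb N)).1
      (monotoneStrictAt_sub_numWeakBelow (Fin.val_strictMono.comp H.strictMono))⟩
  left_inv g := by
    ext i
    exact Nat.add_sub_cancel _ _
  right_inv H := by
    ext i
    exact Nat.sub_add_cancel
      (numWeakBelow_le_of_strictMono (Fin.val_strictMono.comp H.strictMono) i)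

theorem card_monotoneStrictAt_fin (N : ℕ) :
    Nat.card {g : Fin n → Fin N // MonotoneStrictAt p g} =
      (N + numWeakBelow p (n - 1)).choose n := by
  rw [Nat.card_congr ((shiftEquiv p N).trans Set.powersetCard.ofFinEmbEquiv),
    Set.powersetCard.card, Nat.card_eq_fintype_card, Fintype.card_fin]

theorem card_monotoneStrictAt (α : Type*) [LinearOrder α] [Fintype α] :
    Nat.card {g : Fin n → α // MonotoneStrictAt p g} =
      (Fintype.card α + n - 1 - #{t ∈ range (n - 1) | p t}).choose n := by
  let e := (Fintype.orderIsoFinOfCardEq α rfl).symm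
  have eqv : {g : Fin n → α // MonotoneStrictAt p g} ≃
      {g : Fin n → Fin (Fintype.card α) // MonotoneStrictAt p g} :=
    ((Equiv.refl _).arrowCongr e.toEquiv).subtypeEquiv fun _ =>
      (monotoneStrictAt_comp_iff e.toOrderEmbedding).symm
  rw [Nat.card_congr eqv, card_monotoneStrictAt_fin]
  rcases Nat.eq_zero_or_pos n with rfl | hn
  · simp
  · have := numWeakBelow_add_card_filter p (n - 1)
    congr 1
    omega

end Counting

theorem letterLT_iff_of_snd_eq {x y : ℕ × ℕ} (h : x.2 = y.2) : letterLT x y ↔ x.1 < y.1 := by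
  unfold letterLT
  omega

def admissibleParts (r j c : ℕ) : Finset (ℕ ×ₗ ℕ) :=
  (insert (c, j) (range r ×ˢ range j)).map toLex.toEmbedding

theorem mem_admissibleParts {r j c : ℕ} (hc : c < r) {x : ℕ × ℕ} :
    toLex x ∈ admissibleParts r j c ↔ x.1 < r ∧ x.2 ≤ j ∧ (x.2 = j → x.1 = c) := by
  obtain ⟨k, u⟩ := x
  simp only [admissibleParts, mem_map_equiv, Equiv.symm_apply_apply, mem_insert, Prod.mk.injEq,
    mem_product, mem_range]
  omega

theorem card_admissibleParts (r j c : ℕ) : #(admissibleParts r j c) = r * j + 1 := by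
  rw [admissibleParts, card_map, card_insert_of_notMem (by simp), card_product, card_range,
    card_range]

namespace ColoredPerm

variable {r n : ℕ}

def IsDescentAt (a : ColoredPerm r n) (i : ℕ) : Prop :=
  letterLT (letterAt a (i + 1)) (letterAt a i)

instance (a : ColoredPerm r n) : DecidablePred a.IsDescentAt := fun _ =>
  inferInstanceAs (Decidable (letterLT _ _))

theorem intdes_eq_card_filter_range (a : ColoredPerm r n) :
    intdes a = #{t ∈ range (n - 1) | a.IsDescentAt t} := by
  unfold intdes Des
  rw [filter_filter]
  refine card_bij (fun i _ => i.1) (fun i hi => ?_) (fun _ _ _ _ => Fin.ext)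
    (fun t ht => ?_)
  · simp only [mem_filter, mem_univ, true_and, mem_range] at hi ⊢
    exact ⟨by omega, hi.1⟩
  · simp only [mem_filter, mem_range] at ht
    exact ⟨⟨t, by omega⟩, by simpa using ⟨ht.2, by omega⟩, rfl⟩

theorem exists_val_col_eq [NeZero r] (a : ColoredPerm r n)
    (hmono : ∀ i i' : Fin n, a.col i = a.col i') : ∃ c < r, ∀ i, (a.col i).val = c := by
  cases n with
  | zero => exact ⟨0, Nat.pos_of_neZero r, fun i => i.elim0⟩
  | succ m => exact ⟨(a.col 0).val, ZMod.val_lt _, fun i => by rw [hmono i 0]⟩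

section OneColor

variable {a : ColoredPerm r n} {c : ℕ}

theorem isDescentAt_iff (hcol : ∀ i, (a.col i).val = c) {t : ℕ} (h : t + 1 < n) :
    a.IsDescentAt t ↔ (a.perm ⟨t + 1, h⟩ : ℕ) < a.perm ⟨t, Nat.lt_of_succ_lt h⟩ := by
  rw [IsDescentAt, letterLT_iff_of_snd_eq] <;> simp [letterAt, h, Nat.lt_of_succ_lt h, hcol]

theorem letterLT_shiftLetter_iff (hcol : ∀ i, (a.col i).val = c) (k : ℕ) {t : ℕ}
    (h : t + 1 < n) :
    letterLT (shiftLetter r k (letterOf a ⟨t + 1, h⟩))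
      (shiftLetter r k (letterOf a ⟨t, Nat.lt_of_succ_lt h⟩)) ↔ a.IsDescentAt t := by
  rw [letterLT_iff_of_snd_eq (by simp [shiftLetter, letterOf, hcol]), isDescentAt_iff hcol h]
  simp [shiftLetter, letterOf]

theorem isPPart_iff_of_val_col_eq {j : ℕ} {f : Fin n → ℕ × ℕ} (hc : c < r)
    (hcol : ∀ i, (a.col i).val = c) :
    IsPPart r n j a f ↔ (∀ i, toLex (f i) ∈ admissibleParts r j c) ∧
      MonotoneStrictAt a.IsDescentAt (toLex ∘ f) := by
  simp only [mem_admissibleParts hc]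
  constructor
  · rintro ⟨hbound, hle, hlt, htop⟩
    refine ⟨fun i => ⟨(hbound i).1, (hbound i).2, fun h => (hcol i ▸ htop i h).symm⟩,
      fun t h => ⟨Prod.Lex.toLex_le_toLex.2 (hle t h), fun hd => Prod.Lex.toLex_lt_toLex.2 ?_⟩⟩
    rcases hle t h with hlt' | ⟨heq, -⟩
    · exact Or.inl hlt'
    · exact hlt t h heq ((letterLT_shiftLetter_iff hcol _ h).2 hd)
  · rintro ⟨hmem, hmono⟩
    refine ⟨fun i => ⟨(hmem i).1, (hmem i).2.1⟩, fun t h => Prod.Lex.toLex_le_toLex.1 (hmono t h).1,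
      fun t h _ hd => Prod.Lex.toLex_lt_toLex.1 ((hmono t h).2 ?_), fun i h => ?_⟩
    · exact (letterLT_shiftLetter_iff hcol _ h).1 hd
    · rw [hcol, (hmem i).2.2 h]

def isPPartEquiv (j : ℕ) (hc : c < r) (hcol : ∀ i, (a.col i).val = c) :
    {f // IsPPart r n j a f} ≃
      {g : Fin n → admissibleParts r j c // MonotoneStrictAt a.IsDescentAt g} where
  toFun f := ⟨fun i => ⟨toLex (f.1 i), ((isPPart_iff_of_val_col_eq hc hcol).1 f.2).1 i⟩,
    ((isPPart_iff_of_val_col_eq hc hcol).1 f.2).2⟩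
  invFun g := ⟨fun i => ofLex (g.1 i).1, (isPPart_iff_of_val_col_eq hc hcol).2
    ⟨fun i => (g.1 i).2, (monotoneStrictAt_comp_iff (OrderEmbedding.subtype _)).2 g.2⟩⟩
  left_inv _ := rfl
  right_inv _ := rfl

end OneColor

end ColoredPerm

open ColoredPerm in
theorem omegaP_monochromatic_general (r n : ℕ) [NeZero r]
    (a : ColoredPerm r n) (hmono : ∀ i i' : Fin n, a.col i = a.col i')
    (j : ℕ) :
    OmegaP r n j a = (r * j + n - intdes a).choose n := by
  obtain ⟨c, hc, hcol⟩ := exists_val_col_eq a hmono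
  rw [OmegaP, Nat.card_congr (isPPartEquiv j hc hcol), card_monotoneStrictAt, Fintype.card_coe,
    card_admissibleParts, intdes_eq_card_filter_range]
  congr 1
  omega

open ColoredPerm in
/-- If `π ∈ G_{r,n}` is monochromatic then
`Ω_{P(π)}(j) = binomial(rj + n − intdes(π), n)`. -/
theorem omegaP_monochromatic (r n : ℕ) [NeZero r] (hn : 1 ≤ n)
    (a : ColoredPerm r n) (hmono : ∀ i i' : Fin n, a.col i = a.col i')
    (j : ℕ) :
    OmegaP r n j a = (r * j + n - intdes a).choose n :=
  omegaP_monochromatic_general r n a hmono j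
end

section
/- Let π = (σ, c) ∈ G_{r,n} be non-monochromatic, let i be the largest index with c(1) = c(2) = ⋯ = c(i), and set b = c(i+1). Define ρ(π) = (σ, c') ∈ G_{r,n} by c'(s) = b for 1 ≤ s ≤ i and c'(s) = c(s) for i < s ≤ n. If des(π) = des(ρ(π)), then Ω_{P(π)}(j) = Ω_{P(ρ(π))}(j) for every integer j ≥ 0. -/
open scoped BigOperators

/-- `ρ(π)`: recolor the first `i` letters (0-indexed positions `0, …, i−1`) of `π`
with the color of the letter at position `i`. -/
def rho {r n : ℕ} (a : ColoredPerm r n) (i : ℕ) (h : i < n) : ColoredPerm r n :=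
  ⟨a.perm, fun s => if s.1 < i then a.col ⟨i, h⟩ else a.col s⟩


/-! On the initial run both `π` and `ρ(π)` are monochromatic, so there the conditions on a
`P`-partition only compare the values `σ(s)`; the colour `c` of the run enters only through the
parts allowed at its letters, those `(k, u)` with `u < j` or `(k, u) = (c, j)`. For every `c`
these parts form a chain with `r * j + 1` elements, ranked by `partRank`, and recolouring the parts
on the run along the order isomorphism of the chains (`recolorPart`) keeps all conditions inside
the run. At the junction of the run with the next letter `(σ(i+1), b)`, two parts of the same
colour `k` must increase strictly for `π` iff `b^{(k)} < c^{(k)}`, and for `ρ(π)` iff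
`σ(i+1) < σ(i)`. The descent sets of `π` and `ρ(π)` can only differ at `i`, so
`des π = des ρ(π)` says `b < c ↔ σ(i+1) < σ(i)`, and under this equivalence the two junction
conditions correspond through the recolouring. -/

def IsPart (r j s : ℕ) (v : ℕ × ℕ) : Prop :=
  v.1 < r ∧ v.2 ≤ j ∧ (v.2 = j → v.1 = s)

def partRank (j s : ℕ) (v : ℕ × ℕ) : ℕ :=
  v.1 * j + (if s < v.1 then 1 else 0) + v.2

/-- Only the parts between `(s, j)` and `(d, j)` in the chain move, each by one step, so that
`partRank` is preserved. -/
def recolorPart (j s d : ℕ) (v : ℕ × ℕ) : ℕ × ℕ :=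
  if j = 0 then (d, 0)
  else if s < d then
    (if v.1 < s ∨ d < v.1 ∨ (v.1 = s ∧ v.2 < j) then v
     else if v.2 + 1 < j ∨ v.1 = d then (v.1, v.2 + 1)
     else (v.1 + 1, 0))
  else if d < s then
    (if v.1 ≤ d ∨ s < v.1 then v
     else if 1 ≤ v.2 then (v.1, v.2 - 1)
     else if v.1 = d + 1 then (d, j)
     else (v.1 - 1, j - 1))
  else v

section Chain

variable {r j s d : ℕ} {v w : ℕ × ℕ}

theorem partRank_lt_of_fst_lt (hv : IsPart r j s v) (hw : IsPart r j s w) (h : v.1 < w.1) :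
    partRank j s v < partRank j s w := by
  obtain ⟨k, u⟩ := v; obtain ⟨k', u'⟩ := w
  have : (k + 1) * j ≤ k' * j := Nat.mul_le_mul_right _ h
  simp only [IsPart, partRank, add_mul, one_mul] at *
  split_ifs <;> omega

theorem partRank_le_partRank_iff (hv : IsPart r j s v) (hw : IsPart r j s w) :
    partRank j s v ≤ partRank j s w ↔ partLE v w := by
  rcases lt_trichotomy v.1 w.1 with h | h | h
  · have := partRank_lt_of_fst_lt hv hw h
    unfold partLE; omega
  · obtain ⟨k, u⟩ := v; obtain ⟨k', u'⟩ := w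
    simp only at h; subst h
    simp [partRank, partLE]
  · have := partRank_lt_of_fst_lt hw hv h
    unfold partLE; omega

theorem partRank_lt_partRank_iff (hv : IsPart r j s v) (hw : IsPart r j s w) :
    partRank j s v < partRank j s w ↔ partLT v w := by
  rcases lt_trichotomy v.1 w.1 with h | h | h
  · have := partRank_lt_of_fst_lt hv hw h
    unfold partLT; omega
  · obtain ⟨k, u⟩ := v; obtain ⟨k', u'⟩ := w
    simp only at h; subst h
    simp [partRank, partLT]
  · have := partRank_lt_of_fst_lt hw hv h
    unfold partLT; omega

theorem partLE_antisymm (h₁ : partLE v w) (h₂ : partLE w v) : v = w := by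
  obtain ⟨k, u⟩ := v; obtain ⟨k', u'⟩ := w
  unfold partLE at *
  simp only [Prod.mk.injEq]
  omega

theorem isPart_recolorPart (hd : d < r) (hv : IsPart r j s v) :
    IsPart r j d (recolorPart j s d v) := by
  obtain ⟨k, u⟩ := v
  obtain ⟨hk, hu, htop⟩ := hv
  simp only at hk hu htop
  unfold IsPart recolorPart
  split_ifs <;> simp only [not_or, not_and, not_lt, implies_true, and_true] at * <;> omega

theorem partRank_recolorPart (hv : IsPart r j s v) :
    partRank j d (recolorPart j s d v) = partRank j s v := by
  obtain ⟨k, u⟩ := v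
  obtain ⟨-, hu, htop⟩ := hv
  simp only at hu htop
  have hpred : 1 ≤ k → (k - 1) * j + j = k * j := fun h => by
    obtain ⟨m, rfl⟩ := Nat.exists_eq_add_of_le' h
    simp only [Nat.add_sub_cancel]; ring
  unfold recolorPart partRank
  split_ifs <;> simp only [not_or, not_and, not_lt] at * <;>
    subst_vars <;> ring_nf at * <;> omega

theorem recolorPart_recolorPart (hs : s < r) (hd : d < r) (hv : IsPart r j s v) :
    recolorPart j d s (recolorPart j s d v) = v := by
  have hv' : IsPart r j s (recolorPart j d s (recolorPart j s d v)) :=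
    isPart_recolorPart hs (isPart_recolorPart hd hv)
  have hrank : partRank j s (recolorPart j d s (recolorPart j s d v)) = partRank j s v := by
    rw [partRank_recolorPart (isPart_recolorPart hd hv), partRank_recolorPart hv]
  exact partLE_antisymm ((partRank_le_partRank_iff hv' hv).mp hrank.le)
    ((partRank_le_partRank_iff hv hv').mp hrank.ge)

theorem partLE_recolorPart_iff (hd : d < r) (hv : IsPart r j s v) (hw : IsPart r j s w) :
    partLE (recolorPart j s d v) (recolorPart j s d w) ↔ partLE v w := by
  rw [← partRank_le_partRank_iff (isPart_recolorPart hd hv) (isPart_recolorPart hd hw),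
    partRank_recolorPart hv, partRank_recolorPart hw, partRank_le_partRank_iff hv hw]

theorem partLT_recolorPart_iff (hd : d < r) (hv : IsPart r j s v) (hw : IsPart r j s w) :
    partLT (recolorPart j s d v) (recolorPart j s d w) ↔ partLT v w := by
  rw [← partRank_lt_partRank_iff (isPart_recolorPart hd hv) (isPart_recolorPart hd hw),
    partRank_recolorPart hv, partRank_recolorPart hw, partRank_lt_partRank_iff hv hw]

end Chain

def IsPPartStep (r : ℕ) (x y v w : ℕ × ℕ) : Prop :=
  partLE v w ∧ (v.1 = w.1 → letterLT (shiftLetter r v.1 y) (shiftLetter r v.1 x) → partLT v w)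

theorem isPPart_iff {r n j : ℕ} (a : ColoredPerm r n) (f : Fin n → ℕ × ℕ) :
    IsPPart r n j a f ↔ (∀ t, IsPart r j (a.col t).val (f t)) ∧
      ∀ (t : ℕ) (h : t + 1 < n), IsPPartStep r (letterOf a ⟨t, by omega⟩)
        (letterOf a ⟨t + 1, h⟩) (f ⟨t, by omega⟩) (f ⟨t + 1, h⟩) := by
  constructor
  · rintro ⟨hbound, hle, hlt, htop⟩
    exact ⟨fun t => ⟨(hbound t).1, (hbound t).2, fun h => (htop t h).symm⟩,
      fun t h => ⟨hle t h, hlt t h⟩⟩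
  · rintro ⟨hpart, hstep⟩
    exact ⟨fun t => ⟨(hpart t).1, (hpart t).2.1⟩, fun t h => (hstep t h).1,
      fun t h => (hstep t h).2, fun t h => ((hpart t).2.2 h).symm⟩

theorem IsPPart.isPart {r n j : ℕ} {a : ColoredPerm r n} {f : Fin n → ℕ × ℕ}
    (hf : IsPPart r n j a f) (t : Fin n) : IsPart r j (a.col t).val (f t) :=
  ((isPPart_iff a f).1 hf).1 t

section Step

variable {r j b c p q : ℕ} {v w : ℕ × ℕ}

theorem isPPartStep_same_color_iff :
    IsPPartStep r (p, c) (q, c) v w ↔ partLE v w ∧ (q < p → partLT v w) := by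
  simp only [IsPPartStep, letterLT, shiftLetter, lt_self_iff_false, true_and, false_or]
  refine and_congr_right fun hle => ⟨fun h hqp => ?_, fun h _ hqp => h hqp⟩
  rcases hle with hlt | ⟨heq, -⟩
  · exact Or.inl hlt
  · exact h heq hqp

theorem isPPartStep_recolorPart_iff (hc : c < r) (hv : IsPart r j b v) (hw : IsPart r j b w) :
    IsPPartStep r (p, c) (q, c) (recolorPart j b c v) (recolorPart j b c w) ↔
      IsPPartStep r (p, b) (q, b) v w := by
  rw [isPPartStep_same_color_iff, isPPartStep_same_color_iff,
    partLE_recolorPart_iff hc hv hw, partLT_recolorPart_iff hc hv hw]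

theorem shiftLetter_snd {k x : ℕ} (hk : k < r) (hx : x < r) :
    (shiftLetter r k (p, x)).2 = if k ≤ x then x - k else x + r - k := by
  rw [shiftLetter, Nat.mod_eq_of_lt hk]
  split_ifs with h
  · rw [show x + r - k = (x - k) + r by omega, Nat.add_mod_right, Nat.mod_eq_of_lt (by omega)]
  · exact Nat.mod_eq_of_lt (by omega)

/-- The case analysis rests on: for `b ≠ c`, `(q, b)^{(k)} < (p, c)^{(k)}` iff either `b < c`
and `k ∉ (b, c]`, or `c < b` and `k ∈ (c, b]`. -/
theorem isPPartStep_recolorPart_junction_iff (hb : b < r) (hc : c < r)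
    (hpq : b < c ↔ q < p) (hv : IsPart r j b v) (hw : IsPart r j b w) :
    IsPPartStep r (p, c) (q, b) (recolorPart j b c v) w ↔ IsPPartStep r (p, b) (q, b) v w := by
  rw [isPPartStep_same_color_iff, ← hpq]
  have hk := (isPart_recolorPart hc hv).1
  simp only [IsPPartStep, letterLT, shiftLetter_snd hk hb, shiftLetter_snd hk hc]
  simp only [shiftLetter]
  obtain ⟨k, u⟩ := v; obtain ⟨k', u'⟩ := w
  obtain ⟨-, hu, htop⟩ := hv; obtain ⟨-, hu', htop'⟩ := hw
  simp only at hu htop hu' htop' ⊢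
  unfold recolorPart partLE partLT
  split_ifs <;> omega

end Step

def recolorPrefix {n : ℕ} (j s d i : ℕ) (f : Fin n → ℕ × ℕ) : Fin n → ℕ × ℕ :=
  fun t => if t.1 < i then recolorPart j s d (f t) else f t

section Recolor

variable {r n j s d i : ℕ} {f : Fin n → ℕ × ℕ}

theorem recolorPrefix_of_lt {t : Fin n} (ht : t.1 < i) :
    recolorPrefix j s d i f t = recolorPart j s d (f t) :=
  if_pos ht

theorem recolorPrefix_of_le {t : Fin n} (ht : i ≤ t.1) : recolorPrefix j s d i f t = f t :=
  if_neg (Nat.not_lt.mpr ht)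

theorem isPart_recolorPrefix (hd : d < r) (hf : ∀ t : Fin n, t.1 < i → IsPart r j s (f t))
    {t : Fin n} (ht : t.1 < i) : IsPart r j d (recolorPrefix j s d i f t) := by
  rw [recolorPrefix_of_lt ht]
  exact isPart_recolorPart hd (hf t ht)

theorem recolorPrefix_recolorPrefix (hs : s < r) (hd : d < r)
    (hf : ∀ t : Fin n, t.1 < i → IsPart r j s (f t)) :
    recolorPrefix j d s i (recolorPrefix j s d i f) = f := by
  funext t
  by_cases ht : t.1 < i
  · rw [recolorPrefix_of_lt ht, recolorPrefix_of_lt ht, recolorPart_recolorPart hs hd (hf t ht)]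
  · rw [recolorPrefix_of_le (Nat.not_lt.mp ht), recolorPrefix_of_le (Nat.not_lt.mp ht)]

end Recolor

theorem Finset.mem_iff_mem_of_card_eq {α : Type*} [DecidableEq α] {s t : Finset α} {x : α}
    (h : ∀ y, y ≠ x → (y ∈ s ↔ y ∈ t)) (hcard : s.card = t.card) : x ∈ s ↔ x ∈ t := by
  have herase : s.erase x = t.erase x := by
    ext y
    simp only [Finset.mem_erase]
    exact and_congr_right (h y)
  have key : ∀ {s t : Finset α}, s.erase x = t.erase x → s.card = t.card → x ∈ s → x ∈ t :=
    fun {s t} he hc hs => by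
      by_contra ht
      have := Finset.card_erase_add_one hs
      rw [he, Finset.erase_eq_of_notMem ht] at this
      omega
  exact ⟨key herase hcard, key herase.symm hcard.symm⟩

namespace ColoredPerm

section Letters

variable {r n : ℕ} (a : ColoredPerm r n) {i : ℕ} (hi : i < n)

theorem letterAt_eq_letterOf {m : ℕ} (hm : m < n) : letterAt a m = letterOf a ⟨m, hm⟩ :=
  dif_pos hm

theorem mem_Des_iff (t : Fin n) :
    t ∈ Des a ↔ letterLT (letterAt a (t.1 + 1)) (letterAt a t.1) := by
  simp [Des]

theorem col_rho_of_lt {t : Fin n} (ht : t.1 < i) : (rho a i hi).col t = a.col ⟨i, hi⟩ :=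
  if_pos ht

theorem col_rho_of_le {t : Fin n} (ht : i ≤ t.1) : (rho a i hi).col t = a.col t :=
  if_neg (Nat.not_lt.mpr ht)

theorem letterOf_rho_of_lt {t : Fin n} (ht : t.1 < i) :
    letterOf (rho a i hi) t = ((a.perm t : ℕ) + 1, (a.col ⟨i, hi⟩).val) := by
  rw [letterOf, col_rho_of_lt a hi ht]; rfl

theorem letterOf_rho_of_le {t : Fin n} (ht : i ≤ t.1) :
    letterOf (rho a i hi) t = letterOf a t := by
  rw [letterOf, col_rho_of_le a hi ht]; rfl

theorem letterAt_rho_of_le {m : ℕ} (hm : i ≤ m) : letterAt (rho a i hi) m = letterAt a m := by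
  by_cases h : m < n
  · rw [letterAt_eq_letterOf _ h, letterAt_eq_letterOf _ h, letterOf_rho_of_le a hi hm]
  · simp only [letterAt, dif_neg h]

end Letters

variable {r n i : ℕ} {a : ColoredPerm r n} {hi : i < n} {c : ZMod r}

theorem mem_Des_rho_iff_of_ne (hconst : ∀ s : Fin n, s.1 < i → a.col s = c) {t : Fin n}
    (ht : t.1 ≠ i - 1) : t ∈ Des (rho a i hi) ↔ t ∈ Des a := by
  rw [mem_Des_iff, mem_Des_iff]
  by_cases hti : t.1 + 1 < i
  · rw [letterAt_eq_letterOf _ (by omega), letterAt_eq_letterOf _ (by omega),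
      letterAt_eq_letterOf _ (by omega), letterAt_eq_letterOf _ (by omega),
      letterOf_rho_of_lt a hi hti, letterOf_rho_of_lt a hi (t := t) (by omega)]
    simp only [letterOf, hconst ⟨t + 1, _⟩ hti, hconst t (by omega), letterLT, lt_self_iff_false,
      true_and, false_or]
  · rw [letterAt_rho_of_le a hi (by omega), letterAt_rho_of_le a hi (by omega)]

theorem val_col_lt_iff_of_des_rho_eq [NeZero r] (hi1 : 1 ≤ i)
    (hconst : ∀ s : Fin n, s.1 < i → a.col s = c) (hbc : a.col ⟨i, hi⟩ ≠ c)
    (hdes : des (rho a i hi) = des a) :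
    (a.col ⟨i, hi⟩).val < c.val ↔ a.perm ⟨i, hi⟩ < a.perm ⟨i - 1, by omega⟩ := by
  have hi' : i - 1 < n := by omega
  have hlt : (⟨i - 1, hi'⟩ : Fin n).1 < i := by simp only; omega
  have hsucc : (⟨i - 1, hi'⟩ : Fin n).1 + 1 = i := Nat.sub_add_cancel hi1
  have hmem := Finset.mem_iff_mem_of_card_eq (x := (⟨i - 1, hi'⟩ : Fin n))
    (fun t ht => mem_Des_rho_iff_of_ne hconst fun h => ht (Fin.ext h)) hdes
  have hρ : (⟨i - 1, hi'⟩ : Fin n) ∈ Des (rho a i hi) ↔ a.perm ⟨i, hi⟩ < a.perm ⟨i - 1, hi'⟩ := by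
    rw [mem_Des_iff, hsucc, letterAt_rho_of_le a hi le_rfl, letterAt_eq_letterOf _ hi,
      letterAt_eq_letterOf _ hi', letterOf_rho_of_lt a hi hlt]
    simp only [letterOf, letterLT, lt_self_iff_false, true_and, false_or, Fin.lt_def]
    omega
  have hπ : (⟨i - 1, hi'⟩ : Fin n) ∈ Des a ↔ (a.col ⟨i, hi⟩).val < c.val := by
    have hbc' : (a.col ⟨i, hi⟩).val ≠ c.val := fun h => hbc (ZMod.val_injective _ h)
    rw [mem_Des_iff, hsucc, letterAt_eq_letterOf _ hi, letterAt_eq_letterOf _ hi']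
    simp only [letterOf, hconst _ hlt, letterLT]
    omega
  rw [← hρ, ← hπ, hmem]

variable {j : ℕ} [NeZero r]

theorem isPPart_recolorPrefix_iff (hconst : ∀ s : Fin n, s.1 < i → a.col s = c)
    (hjunction : (a.col ⟨i, hi⟩).val < c.val ↔ a.perm ⟨i, hi⟩ < a.perm ⟨i - 1, by omega⟩)
    {f : Fin n → ℕ × ℕ} (hf : ∀ t : Fin n, t.1 < i → IsPart r j (a.col ⟨i, hi⟩).val (f t)) :
    IsPPart r n j a (recolorPrefix j (a.col ⟨i, hi⟩).val c.val i f) ↔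
      IsPPart r n j (rho a i hi) f := by
  have hb := (a.col ⟨i, hi⟩).val_lt
  have hc := c.val_lt
  have letterOf_of_lt : ∀ {t : Fin n}, t.1 < i → letterOf a t = ((a.perm t : ℕ) + 1, c.val) :=
    fun ht => by rw [letterOf, hconst _ ht]
  have hpart : (∀ t, IsPart r j (a.col t).val (recolorPrefix j (a.col ⟨i, hi⟩).val c.val i f t)) ↔
      ∀ t, IsPart r j ((rho a i hi).col t).val (f t) := by
    refine forall_congr' fun t => ?_
    by_cases ht : t.1 < i
    · rw [hconst t ht, col_rho_of_lt a hi ht]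
      exact iff_of_true (isPart_recolorPrefix hc hf ht) (hf t ht)
    · rw [recolorPrefix_of_le (Nat.not_lt.mp ht), col_rho_of_le a hi (Nat.not_lt.mp ht)]
  rw [isPPart_iff, isPPart_iff, hpart]
  refine and_congr_right fun hpartρ => forall_congr' fun t => forall_congr' fun h => ?_
  have ht₀ : (⟨t, by omega⟩ : Fin n).1 = t := rfl
  have ht₁ : (⟨t + 1, h⟩ : Fin n).1 = t + 1 := rfl
  rcases lt_trichotomy (t + 1) i with hti | rfl | hti
  · rw [letterOf_of_lt (by omega), letterOf_of_lt (by omega),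
      letterOf_rho_of_lt a hi (by omega), letterOf_rho_of_lt a hi (by omega),
      recolorPrefix_of_lt (by omega), recolorPrefix_of_lt (by omega)]
    exact isPPartStep_recolorPart_iff hc (hf _ (by omega)) (hf _ (by omega))
  · have hnext : letterOf a ⟨t + 1, h⟩ = ((a.perm ⟨t + 1, h⟩ : ℕ) + 1, (a.col ⟨t + 1, h⟩).val) :=
      rfl
    rw [letterOf_of_lt (by omega), letterOf_rho_of_lt a hi (by omega),
      letterOf_rho_of_le a hi le_rfl, hnext, recolorPrefix_of_lt (by omega),
      recolorPrefix_of_le (t := ⟨t + 1, h⟩) le_rfl]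
    refine isPPartStep_recolorPart_junction_iff hb hc ?_ (hf _ (by omega)) ?_
    · rw [hjunction, Fin.lt_def]
      simp only [Nat.add_sub_cancel]
      omega
    · rw [← col_rho_of_le a hi (t := ⟨t + 1, h⟩) le_rfl]
      exact hpartρ _
  · rw [letterOf_rho_of_le a hi (by omega), letterOf_rho_of_le a hi (by omega),
      recolorPrefix_of_le (by omega), recolorPrefix_of_le (by omega)]

def rhoPPartEquiv (hconst : ∀ s : Fin n, s.1 < i → a.col s = c)
    (hjunction : (a.col ⟨i, hi⟩).val < c.val ↔ a.perm ⟨i, hi⟩ < a.perm ⟨i - 1, by omega⟩) :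
    {f // IsPPart r n j (rho a i hi) f} ≃ {f // IsPPart r n j a f} :=
  have hb := (a.col ⟨i, hi⟩).val_lt
  have hc := c.val_lt
  have isPart_rho {f} (hf : IsPPart r n j (rho a i hi) f) (t : Fin n) (ht : t.1 < i) :
      IsPart r j (a.col ⟨i, hi⟩).val (f t) := by
    simpa only [col_rho_of_lt a hi ht] using hf.isPart t
  have isPart_a {g} (hg : IsPPart r n j a g) (t : Fin n) (ht : t.1 < i) :
      IsPart r j c.val (g t) := by
    simpa only [hconst t ht] using hg.isPart t
  { toFun f := ⟨recolorPrefix j (a.col ⟨i, hi⟩).val c.val i f.1,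
      (isPPart_recolorPrefix_iff hconst hjunction (isPart_rho f.2)).2 f.2⟩
    invFun g := ⟨recolorPrefix j c.val (a.col ⟨i, hi⟩).val i g.1,
      (isPPart_recolorPrefix_iff hconst hjunction
        (fun _ ht => isPart_recolorPrefix hb (isPart_a g.2) ht)).1
        (by rw [recolorPrefix_recolorPrefix hc hb (isPart_a g.2)]; exact g.2)⟩
    left_inv f := Subtype.ext (recolorPrefix_recolorPrefix hb hc (isPart_rho f.2))
    right_inv g := Subtype.ext (recolorPrefix_recolorPrefix hc hb (isPart_a g.2)) }

end ColoredPerm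

open ColoredPerm in
/-- If `π` is non-monochromatic with initial monochromatic run of length `i`, and
recoloring that run to the color of the next letter preserves the number of
descents, then `Ω_{P(π)}(j) = Ω_{P(ρ(π))}(j)`. -/
theorem omegaP_rho (r n : ℕ) [NeZero r]
    (a : ColoredPerm r n) (i : ℕ) (hi1 : 1 ≤ i) (hi2 : i < n)
    (hconst : ∀ s : Fin n, s.1 < i → a.col s = a.col ⟨0, by omega⟩)
    (hbreak : a.col ⟨i, hi2⟩ ≠ a.col ⟨0, by omega⟩)
    (hdes : des (rho a i hi2) = des a) (j : ℕ) :
    OmegaP r n j (rho a i hi2) = OmegaP r n j a :=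
  Nat.card_congr <| rhoPPartEquiv hconst <| val_col_lt_iff_of_des_rho_eq hi1 hconst hbreak hdes
end

section
/- For every π = (σ, c) ∈ G_{r,n} and every integer j ≥ 0, Ω_{P(π)}(j) = binomial(r·j + n − intdes(π), n). -/
open scoped BigOperators

/-!
Encode a `P(π)`-partition `f` by `g i = rank (f i)`, the position of `f i` among the parts of
`[0,j]_{(r)}` admissible at the letter `π(i)` of colour `c`, i.e. all parts except the `(k, j)`
with `k ≠ c`; these positions fill `{0, …, r j}`. The colour shift `x ↦ x^{(k)}` changes the
comparison of two consecutive letters exactly when the extra `+1` in `rank` does, so the order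
conditions of `P(π)` become `g 0 ≤ ⋯ ≤ g (n-1) ≤ r j` with strict increases at the internal
descents of `π`. Adding to `g i` the number of non-descents before `i` makes the sequence strictly
increasing with values below `r j + n - intdes π`, i.e. an `n`-subset of that range.
-/

open Finset

theorem Nat.mul_add_le_mul_of_lt {k r : ℕ} (j : ℕ) (hk : k < r) : k * j + j ≤ r * j := by
  simpa [add_one_mul] using Nat.mul_le_mul_right j hk

namespace Fin

variable {n : ℕ}

theorem monotone_of_le_mk_succ {α : Type*} [Preorder α] {f : Fin n → α}
    (hf : ∀ (i : ℕ) (h : i + 1 < n), f ⟨i, Nat.lt_of_succ_lt h⟩ ≤ f ⟨i + 1, h⟩) :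
    Monotone f := by
  cases n with
  | zero => exact fun i => i.elim0
  | succ m => exact Fin.monotone_iff_le_succ.2 fun i => hf i (Nat.succ_lt_succ i.2)

theorem strictMono_of_lt_mk_succ {α : Type*} [Preorder α] {f : Fin n → α}
    (hf : ∀ (i : ℕ) (h : i + 1 < n), f ⟨i, Nat.lt_of_succ_lt h⟩ < f ⟨i + 1, h⟩) :
    StrictMono f := by
  cases n with
  | zero => exact fun i => i.elim0
  | succ m => exact Fin.strictMono_iff_lt_succ.2 fun i => hf i (Nat.succ_lt_succ i.2)

theorem val_le_of_strictMono_s14 {f : Fin n → ℕ} (hf : StrictMono f) (i : Fin n) :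
    (i : ℕ) ≤ f i := by
  obtain ⟨i, hi⟩ := i
  induction i with
  | zero => exact Nat.zero_le _
  | succ i ih => exact (ih (by omega)).trans_lt (hf (Fin.mk_lt_mk.mpr i.lt_succ_self))

end Fin

section StrictAtChain

variable {n : ℕ} (D : ℕ → Prop) [DecidablePred D]

def IsStrictAtChain (N : ℕ) (g : Fin n → ℕ) : Prop :=
  (∀ i, g i ≤ N) ∧
    ∀ (i : ℕ) (h : i + 1 < n),
      g ⟨i, Nat.lt_of_succ_lt h⟩ + (if D i then 1 else 0) ≤ g ⟨i + 1, h⟩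

def weakSteps (i : ℕ) : ℕ := #{t ∈ range i | ¬ D t}

theorem weakSteps_succ (i : ℕ) :
    weakSteps D (i + 1) = weakSteps D i + if D i then 0 else 1 := by
  simp only [weakSteps, card_filter, sum_range_succ, ite_not]

theorem weakSteps_le (i : ℕ) : weakSteps D i ≤ i :=
  (card_filter_le _ _).trans (card_range i).le

theorem weakSteps_mono : Monotone (weakSteps D) := fun _ _ h =>
  card_le_card (filter_subset_filter _ (range_subset_range.2 h))

theorem weakSteps_add_card_filter (i : ℕ) : weakSteps D i + #{t ∈ range i | D t} = i := by
  rw [weakSteps, add_comm, card_filter_add_card_filter_not, card_range]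

theorem add_weakSteps_lt_add_weakSteps_succ_iff {a b : ℕ} (i : ℕ) :
    a + weakSteps D i < b + weakSteps D (i + 1) ↔ a + (if D i then 1 else 0) ≤ b := by
  rw [weakSteps_succ]
  split_ifs <;> omega

theorem add_weakSteps_lt {N m i : ℕ} (hi : i < n) (hm : m ≤ N) :
    m + weakSteps D i < N + n - #{t ∈ range (n - 1) | D t} := by
  have := weakSteps_mono D (show i ≤ n - 1 by omega)
  have := weakSteps_add_card_filter D (n - 1)
  omega

theorem sub_weakSteps_le {N m : ℕ} (hm : m < N + n - #{t ∈ range (n - 1) | D t}) :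
    m - weakSteps D (n - 1) ≤ N := by
  have := weakSteps_add_card_filter D (n - 1)
  omega

theorem weakSteps_le_of_strictMono {f : Fin n → ℕ} (hf : StrictMono f) (i : Fin n) :
    weakSteps D i ≤ f i :=
  (weakSteps_le D i).trans (Fin.val_le_of_strictMono_s14 hf i)

theorem isStrictAtChain_sub_weakSteps {N : ℕ}
    (h : Fin n ↪o Fin (N + n - #{t ∈ range (n - 1) | D t})) :
    IsStrictAtChain D N fun i => h i - weakSteps D i := by
  have hle : ∀ i : Fin n, weakSteps D i ≤ h i :=
    weakSteps_le_of_strictMono D (Fin.val_strictMono.comp h.strictMono)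
  have hstep : ∀ (i : ℕ) (hi : i + 1 < n),
      h ⟨i, Nat.lt_of_succ_lt hi⟩ - weakSteps D i + (if D i then 1 else 0)
        ≤ h ⟨i + 1, hi⟩ - weakSteps D (i + 1) := fun i hi => by
    rw [← add_weakSteps_lt_add_weakSteps_succ_iff,
      Nat.sub_add_cancel (hle ⟨i, Nat.lt_of_succ_lt hi⟩),
      Nat.sub_add_cancel (hle ⟨i + 1, hi⟩)]
    exact h.strictMono (Fin.mk_lt_mk.2 i.lt_succ_self)
  refine ⟨fun i => ?_, hstep⟩
  have hmono : Monotone fun i : Fin n => (h i : ℕ) - weakSteps D i :=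
    Fin.monotone_of_le_mk_succ fun i hi => (Nat.le_add_right _ _).trans (hstep i hi)
  have hi : i ≤ ⟨n - 1, Nat.sub_one_lt_of_lt i.2⟩ := Fin.mk_le_mk.2 (Nat.le_sub_one_of_lt i.2)
  exact (hmono hi).trans (sub_weakSteps_le D (h _).2)

def strictAtChainEquiv (N : ℕ) :
    {g : Fin n → ℕ // IsStrictAtChain D N g} ≃
      (Fin n ↪o Fin (N + n - #{t ∈ range (n - 1) | D t})) where
  toFun g := OrderEmbedding.ofStrictMono
    (fun i => ⟨g.1 i + weakSteps D i, add_weakSteps_lt D i.2 (g.2.1 i)⟩)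
    (Fin.strictMono_of_lt_mk_succ fun i h =>
      (add_weakSteps_lt_add_weakSteps_succ_iff D i).2 (g.2.2 i h))
  invFun h := ⟨fun i => h i - weakSteps D i, isStrictAtChain_sub_weakSteps D h⟩
  left_inv _ := Subtype.ext <| funext fun _ => Nat.add_sub_cancel _ _
  right_inv h := RelEmbedding.ext fun i => Fin.ext <| Nat.sub_add_cancel <|
    weakSteps_le_of_strictMono D (Fin.val_strictMono.comp h.strictMono) i

theorem card_isStrictAtChain (N : ℕ) :
    Nat.card {g : Fin n → ℕ // IsStrictAtChain D N g} =
      (N + n - #{t ∈ range (n - 1) | D t}).choose n := by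
  rw [Nat.card_congr ((strictAtChainEquiv D N).trans Set.powersetCard.ofFinEmbEquiv),
    Set.powersetCard.card, Nat.card_fin]

end StrictAtChain

namespace OmegaP

def Admissible (r j c : ℕ) (x : ℕ × ℕ) : Prop :=
  x.1 < r ∧ x.2 ≤ j ∧ (x.2 = j → c = x.1)

/-- The position of `x` in the lexicographic list of parts admissible at colour `c`; since
`(c, j)` is the only admissible part in the top row, blocks `k > c` are shifted by one. -/
def rank (j c : ℕ) (x : ℕ × ℕ) : ℕ :=
  x.1 * j + x.2 + if c < x.1 then 1 else 0

def unrank (j c m : ℕ) : ℕ × ℕ :=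
  if m < c * j + j then (m / j, m % j)
  else if m = c * j + j then (c, j)
  else ((m - 1) / j, (m - 1) % j)

variable {r n j c : ℕ}

theorem rank_le {x : ℕ × ℕ} (hx : Admissible r j c x) : rank j c x ≤ r * j := by
  obtain ⟨hk, hu, htop⟩ := hx
  have := Nat.mul_add_le_mul_of_lt j hk
  unfold rank
  split_ifs <;> omega

theorem unrank_admissible {m : ℕ} (hc : c < r) (hm : m ≤ r * j) :
    Admissible r j c (unrank j c m) := by
  unfold unrank
  split_ifs with hlow htop
  · have hj : 0 < j := by rcases j with _ | _ <;> simp_all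
    have := (Nat.div_lt_iff_lt_mul hj).2 (show m < (c + 1) * j by rwa [add_one_mul])
    exact ⟨by omega, (Nat.mod_lt _ hj).le, fun h => absurd h (Nat.mod_lt _ hj).ne⟩
  · exact ⟨hc, le_rfl, fun _ => rfl⟩
  · have hj : 0 < j := by rcases j with _ | _ <;> simp_all
    have := (Nat.div_lt_iff_lt_mul hj).2 (show m - 1 < r * j by omega)
    exact ⟨this, (Nat.mod_lt _ hj).le, fun h => absurd h (Nat.mod_lt _ hj).ne⟩

theorem unrank_rank {x : ℕ × ℕ} (hx : Admissible r j c x) : unrank j c (rank j c x) = x := by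
  obtain ⟨k, u⟩ := x
  obtain ⟨hk, hu, htop⟩ := hx
  dsimp only at hk hu htop
  rcases hu.eq_or_lt with rfl | hu
  · obtain rfl := htop rfl
    simp [rank, unrank]
  · have hdm {m : ℕ} (h : m = k * j + u) : (m / j, m % j) = (k, u) := by
      rw [Prod.mk.injEq, Nat.div_mod_unique (by omega)]
      exact ⟨by rw [h]; ring, hu⟩
    unfold unrank
    by_cases hck : c < k
    · have hr : rank j c (k, u) = k * j + u + 1 := by simp [rank, hck]
      have := Nat.mul_add_le_mul_of_lt j hck
      rw [hr, if_neg (by omega), if_neg (by omega)]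
      exact hdm (by omega)
    · have hr : rank j c (k, u) = k * j + u := by simp [rank, hck]
      have := Nat.mul_le_mul_right j (not_lt.1 hck)
      rw [hr, if_pos (by omega)]
      exact hdm rfl

theorem rank_unrank {m : ℕ} (hm : m ≤ r * j) : rank j c (unrank j c m) = m := by
  unfold unrank
  split_ifs with hlow htop
  · have hj : 0 < j := by rcases j with _ | _ <;> simp_all
    have := (Nat.div_lt_iff_lt_mul hj).2 (show m < (c + 1) * j by rwa [add_one_mul])
    have := Nat.div_add_mod' m j
    simp only [rank]
    rw [if_neg (by omega)]
    omega
  · simp [rank, htop]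
  · have hj : 0 < j := by rcases j with _ | _ <;> simp_all
    have := (Nat.le_div_iff_mul_le hj).2
      (show (c + 1) * j ≤ m - 1 by rw [add_one_mul]; omega)
    have := Nat.div_add_mod' (m - 1) j
    simp only [rank]
    rw [if_pos (by omega)]
    omega

theorem shiftLetter_mk {c k : ℕ} (hc : c < r) (hk : k < r) (v : ℕ) :
    shiftLetter r k (v, c) = (v, if k ≤ c then c - k else c + r - k) := by
  simp only [shiftLetter, Nat.mod_eq_of_lt hk, Prod.mk.injEq, true_and]
  split_ifs with h
  · rw [show c + r - k = c - k + r by omega, Nat.add_mod_right, Nat.mod_eq_of_lt (by omega)]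
  · rw [Nat.mod_eq_of_lt (by omega)]

def PartStep (r : ℕ) (L₀ L₁ x y : ℕ × ℕ) : Prop :=
  partLE x y ∧
    (x.1 = y.1 → letterLT (shiftLetter r x.1 L₁) (shiftLetter r x.1 L₀) → partLT x y)

/-- Shifting colours by `k` preserves the comparison of two letters unless exactly one of their
colours is below `k`, and the summand `[c < k]` of `rank` compensates for exactly that. -/
theorem partStep_iff_rank_le {L₀ L₁ x y : ℕ × ℕ} (h₀ : L₀.2 < r) (h₁ : L₁.2 < r)
    (hx : Admissible r j L₀.2 x) (hy : Admissible r j L₁.2 y) :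
    PartStep r L₀ L₁ x y ↔
      rank j L₀.2 x + (if letterLT L₁ L₀ then 1 else 0) ≤ rank j L₁.2 y := by
  obtain ⟨v₀, c₀⟩ := L₀
  obtain ⟨v₁, c₁⟩ := L₁
  obtain ⟨k₀, u₀⟩ := x
  obtain ⟨k₁, u₁⟩ := y
  obtain ⟨hk₀, hu₀, htop₀⟩ := hx
  obtain ⟨hk₁, hu₁, htop₁⟩ := hy
  dsimp only at h₀ h₁ hk₀ hu₀ htop₀ hk₁ hu₁ htop₁
  simp only [PartStep, partLE, partLT, letterLT, rank, shiftLetter_mk h₁ hk₀,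
    shiftLetter_mk h₀ hk₀]
  rcases lt_trichotomy k₀ k₁ with hk | rfl | hk
  · have := Nat.mul_add_le_mul_of_lt j hk
    grind
  · grind
  · have := Nat.mul_add_le_mul_of_lt j hk
    grind

abbrev IsDescentAt (a : ColoredPerm r n) (i : ℕ) : Prop :=
  letterLT (ColoredPerm.letterAt a (i + 1)) (ColoredPerm.letterAt a i)

theorem isDescentAt_iff (a : ColoredPerm r n) {i : ℕ} (h : i + 1 < n) :
    IsDescentAt a i ↔
      letterLT (letterOf a ⟨i + 1, h⟩) (letterOf a ⟨i, Nat.lt_of_succ_lt h⟩) := by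
  simp only [IsDescentAt, ColoredPerm.letterAt, letterOf, dif_pos h,
    dif_pos (Nat.lt_of_succ_lt h)]

theorem intdes_eq_card (a : ColoredPerm r n) :
    ColoredPerm.intdes a = #{t ∈ range (n - 1) | IsDescentAt a t} := by
  refine card_bij (fun i _ => i.val) (fun i hi => ?_) (fun _ _ _ _ => Fin.ext) (fun t ht => ?_)
  · simp only [ColoredPerm.Des, mem_filter, mem_univ, true_and] at hi
    simp only [mem_filter, mem_range]
    exact ⟨by omega, hi.1⟩
  · simp only [mem_filter, mem_range] at ht
    exact ⟨⟨t, by omega⟩, by simp [ColoredPerm.Des, ht.2]; omega, rfl⟩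

theorem isPPart_iff (a : ColoredPerm r n) (f : Fin n → ℕ × ℕ) :
    IsPPart r n j a f ↔ (∀ i, Admissible r j (a.col i).val (f i)) ∧
      ∀ (i : ℕ) (h : i + 1 < n), PartStep r (letterOf a ⟨i, Nat.lt_of_succ_lt h⟩)
        (letterOf a ⟨i + 1, h⟩) (f ⟨i, Nat.lt_of_succ_lt h⟩) (f ⟨i + 1, h⟩) := by
  simp only [IsPPart, Admissible, PartStep, forall_and]
  tauto

theorem partStep_letterOf_iff [NeZero r] (a : ColoredPerm r n) {i : ℕ} (h : i + 1 < n)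
    {x y : ℕ × ℕ} (hx : Admissible r j (a.col ⟨i, Nat.lt_of_succ_lt h⟩).val x)
    (hy : Admissible r j (a.col ⟨i + 1, h⟩).val y) :
    PartStep r (letterOf a ⟨i, Nat.lt_of_succ_lt h⟩) (letterOf a ⟨i + 1, h⟩) x y ↔
      rank j (a.col ⟨i, Nat.lt_of_succ_lt h⟩).val x + (if IsDescentAt a i then 1 else 0)
        ≤ rank j (a.col ⟨i + 1, h⟩).val y := by
  rw [partStep_iff_rank_le (ZMod.val_lt _) (ZMod.val_lt _) hx hy]
  simp only [isDescentAt_iff a h]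
  rfl

def isPPartEquiv [NeZero r] (a : ColoredPerm r n) (j : ℕ) :
    {f // IsPPart r n j a f} ≃
      {g : Fin n → ℕ // IsStrictAtChain (IsDescentAt a) (r * j) g} where
  toFun f := ⟨fun i => rank j (a.col i).val (f.1 i), by
    obtain ⟨hadm, hstep⟩ := (isPPart_iff a f.1).1 f.2
    exact ⟨fun i => rank_le (hadm i),
      fun i h => (partStep_letterOf_iff a h (hadm _) (hadm _)).1 (hstep i h)⟩⟩
  invFun g := ⟨fun i => unrank j (a.col i).val (g.1 i), by
    have hadm (i : Fin n) : Admissible r j (a.col i).val (unrank j (a.col i).val (g.1 i)) :=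
      unrank_admissible (ZMod.val_lt _) (g.2.1 i)
    refine (isPPart_iff a _).2
      ⟨hadm, fun i h => (partStep_letterOf_iff a h (hadm _) (hadm _)).2 ?_⟩
    simp only [rank_unrank (g.2.1 _)]
    exact g.2.2 i h⟩
  left_inv f := Subtype.ext <| funext fun i => unrank_rank (((isPPart_iff a f.1).1 f.2).1 i)
  right_inv g := Subtype.ext <| funext fun i => rank_unrank (g.2.1 i)

end OmegaP

open ColoredPerm in
theorem omegaP_eq_choose_general (r n : ℕ) [NeZero r]
    (a : ColoredPerm r n) (j : ℕ) :
    OmegaP r n j a = (r * j + n - intdes a).choose n := by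
  rw [OmegaP, Nat.card_congr (OmegaP.isPPartEquiv a j), card_isStrictAtChain,
    OmegaP.intdes_eq_card]

open ColoredPerm in
/-- For every `π ∈ G_{r,n}`, `Ω_{P(π)}(j) = binomial(rj + n − intdes(π), n)`. -/
theorem omegaP_eq_choose (r n : ℕ) [NeZero r] (hn : 1 ≤ n)
    (a : ColoredPerm r n) (j : ℕ) :
    OmegaP r n j a = (r * j + n - intdes a).choose n :=
  omegaP_eq_choose_general r n a j
end
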